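/- arXiv:math/9508207 — 2 statements merged into one kernel-verified Lean document; each statement's English description precedes it below -/
import Mathlib

section
/- Let T : X → Y be a bounded operator between Banach spaces and let 𝔽 ⊆ 𝔻 be a finite subset of local height n. Then τ(T | ℋ(𝔽)) ≤ τ(T | ℋ(𝔻₁ⁿ)): the Haar type constant over any index set of local height n is dominated by the one over the full dyadic tree of depth n. -/
open MeasureTheory Real Set
open scoped Classical

noncomputable section

/-- The dyadic interval `Δ_k^{(j)} = [(j-1)/2^k, j/2^k)`. -/
def dyadic (k : ℕ) (j : ℤ) : Set ℝ := Set.Ico (((j : ℝ) - 1) / 2 ^ k) ((j : ℝ) / 2 ^ k)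

/-- The Haar function `χ_k^{(j)}`. -/
def haar (k : ℕ) (j : ℤ) (t : ℝ) : ℝ :=
  if t ∈ dyadic k (2 * j - 1) then (2 : ℝ) ^ (((k : ℝ) - 1) / 2)
  else if t ∈ dyadic k (2 * j) then -(2 : ℝ) ^ (((k : ℝ) - 1) / 2)
  else 0

/-- Membership in the dyadic tree `𝔻`. -/
def memD (kj : ℕ × ℤ) : Prop := 1 ≤ kj.1 ∧ 1 ≤ kj.2 ∧ kj.2 ≤ 2 ^ (kj.1 - 1)

/-- The finite dyadic tree `𝔻_m^n`. -/
def Dtree (m n : ℕ) : Finset (ℕ × ℤ) :=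
  (Finset.Icc m n).biUnion fun k => (Finset.Icc (1 : ℤ) (2 ^ (k - 1))).image fun j => (k, j)

/-- Number of indices of `F` lying on the branch through `t`. -/
def branchCount (F : Finset (ℕ × ℤ)) (t : ℝ) : ℕ :=
  (F.filter fun kj => t ∈ dyadic (kj.1 - 1) kj.2).card

/-- The local height of a finite index set. -/
def lh (F : Finset (ℕ × ℤ)) : ℕ :=
  sSup {m | ∃ t ∈ Set.Ico (0 : ℝ) 1, branchCount F t = m}

/-- The transformation `φ_h^{(i)}` interchanging `Δ_{h+1}^{(4i-2)}` and `Δ_{h+1}^{(4i-1)}`. -/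
def phi (h : ℕ) (i : ℤ) (t : ℝ) : ℝ :=
  if t ∈ dyadic (h + 1) (4 * i - 2) then t + 1 / 2 ^ (h + 1)
  else if t ∈ dyadic (h + 1) (4 * i - 1) then t - 1 / 2 ^ (h + 1)
  else t

/-- The Haar type ideal norm `τ(T | ℋ(F))`. -/
def tau {X Y : Type*} [NormedAddCommGroup X] [NormedSpace ℝ X]
    [NormedAddCommGroup Y] [NormedSpace ℝ Y]
    (T : X →L[ℝ] Y) (F : Finset (ℕ × ℤ)) : ℝ :=
  sInf {c : ℝ | 0 ≤ c ∧ ∀ x : ℕ × ℤ → X,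
    Real.sqrt (∫ t in Set.Ico (0 : ℝ) 1, ‖∑ kj ∈ F, haar kj.1 kj.2 t • T (x kj)‖ ^ 2)
      ≤ c * Real.sqrt (∑ kj ∈ F, ‖x kj‖ ^ 2)}

end

/- ### Auxiliary development ### -/

noncomputable section TauAux
def sq2 : ℝ := (2 : ℝ) ^ ((1 : ℝ) / 2)
lemma sq2_pos : 0 < sq2 := Real.rpow_pos_of_pos two_pos _
lemma sq2_ne : sq2 ≠ 0 := ne_of_gt sq2_pos
lemma sq2_mul_self : sq2 * sq2 = 2 := by
  rw [sq2, ← Real.rpow_add two_pos]; norm_num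

variable {E : Type*} [NormedAddCommGroup E] [NormedSpace ℝ E]

lemma norm_sq2_smul (z : E) : ‖sq2 • z‖ ^ 2 = 2 * ‖z‖ ^ 2 := by
  rw [norm_smul, Real.norm_eq_abs, abs_of_pos sq2_pos, mul_pow, sq, sq2_mul_self]

lemma norm_sq2_inv_smul (z : E) : ‖sq2⁻¹ • z‖ ^ 2 = (1 / 2) * ‖z‖ ^ 2 := by
  rw [norm_smul, Real.norm_eq_abs, abs_inv, abs_of_pos sq2_pos, mul_pow, inv_pow, sq,
    sq2_mul_self]
  norm_num

lemma dyadic_double {k : ℕ} {i : ℤ} {t : ℝ} : t / 2 ∈ dyadic (k + 1) i ↔ t ∈ dyadic k i := by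
  simp only [dyadic, Set.mem_Ico, pow_succ, ← div_div]
  rw [div_le_div_iff_of_pos_right two_pos, div_lt_div_iff_of_pos_right two_pos]

lemma dyadic_shift {k : ℕ} {i : ℤ} {t : ℝ} :
    (t + 1) / 2 ∈ dyadic (k + 1) i ↔ t ∈ dyadic k (i - 2 ^ k) := by
  have hP : (0:ℝ) < 2 ^ k := by positivity
  simp only [dyadic, Set.mem_Ico, pow_succ, ← div_div]
  rw [div_le_div_iff_of_pos_right two_pos, div_lt_div_iff_of_pos_right two_pos]
  push_cast
  have e1 : ((i:ℝ) - 2 ^ k - 1) / 2 ^ k = ((i:ℝ) - 1) / 2 ^ k - 1 := by field_simp; ring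
  have e2 : ((i:ℝ) - 2 ^ k) / 2 ^ k = (i:ℝ) / 2 ^ k - 1 := by field_simp
  rw [e1, e2]
  constructor <;> rintro ⟨h1, h2⟩ <;> constructor <;> linarith

lemma haar_half (k : ℕ) (j : ℤ) (t : ℝ) : haar (k + 1) j (t / 2) = sq2 * haar k j t := by
  have hv : (2:ℝ) ^ ((k:ℝ) / 2) = sq2 * 2 ^ (((k:ℝ) - 1) / 2) := by
    rw [sq2, ← Real.rpow_add two_pos]; congr 1; ring
  unfold haar
  rw [if_congr dyadic_double rfl (if_congr dyadic_double rfl rfl)]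
  split_ifs <;> simp [hv, mul_neg]

lemma haar_half_right (k : ℕ) (j : ℤ) (t : ℝ) :
    haar (k + 2) j ((t + 1) / 2) = sq2 * haar (k + 1) (j - 2 ^ k) t := by
  have hv : (2:ℝ) ^ (((k:ℝ) + 1) / 2) = sq2 * 2 ^ ((k:ℝ) / 2) := by
    rw [sq2, ← Real.rpow_add two_pos]; congr 1; ring
  have e1 : 2 * j - 1 - 2 ^ (k+1) = 2 * (j - 2 ^ k) - 1 := by ring
  have e2 : 2 * j - 2 ^ (k+1) = 2 * (j - 2 ^ k) := by ring
  unfold haar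
  rw [show k + 2 = (k+1) + 1 from rfl,
    if_congr (by rw [dyadic_shift, e1]) rfl (if_congr (by rw [dyadic_shift, e2]) rfl rfl)]
  split_ifs <;> simp [hv, mul_neg]

lemma haar_supp {k : ℕ} {j : ℤ} {t : ℝ} (h : t ∉ dyadic k j) : haar (k + 1) j t = 0 := by
  have hP : (0:ℝ) < 2 ^ k := by positivity
  have hQ : (0:ℝ) < 2 ^ (k+1) := by positivity
  have e1 : (2*(j:ℝ) - 1 - 1) / 2^(k+1) = ((j:ℝ) - 1)/2^k := by
    rw [pow_succ]; field_simp; ring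
  have e2 : (2*(j:ℝ)) / 2^(k+1) = (j:ℝ)/2^k := by
    rw [pow_succ]; field_simp
  simp only [dyadic, Set.mem_Ico, not_and_or, not_le, not_lt] at h
  have sub1 : t ∉ dyadic (k+1) (2*j - 1) := by
    simp only [dyadic, Set.mem_Ico, not_and_or, not_le, not_lt]
    push_cast
    rcases h with h | h
    · left; rw [e1]; exact h
    · right
      have m1 : (2*(j:ℝ) - 1)/2^(k+1) ≤ (2*(j:ℝ))/2^(k+1) :=
        (div_le_div_iff_of_pos_right hQ).mpr (by linarith)
      linarith [e2 ▸ m1]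
  have sub2 : t ∉ dyadic (k+1) (2*j) := by
    simp only [dyadic, Set.mem_Ico, not_and_or, not_le, not_lt]
    push_cast
    rcases h with h | h
    · left
      have m1 : (2*(j:ℝ) - 1 - 1)/2^(k+1) ≤ (2*(j:ℝ) - 1)/2^(k+1) :=
        (div_le_div_iff_of_pos_right hQ).mpr (by linarith)
      linarith [e1 ▸ m1]
    · right; rw [e2]; exact h
  unfold haar
  rw [if_neg sub1, if_neg sub2]

lemma haar_one_left {t : ℝ} (h0 : 0 ≤ t) (h1 : t < 1 / 2) : haar 1 1 t = 1 := by
  have hm : t ∈ dyadic 1 (2 * 1 - 1) := by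
    simp only [dyadic, Set.mem_Ico]
    push_cast
    constructor <;> [linarith; linarith]
  unfold haar
  rw [if_pos hm]
  norm_num

lemma haar_one_right {t : ℝ} (h0 : 1 / 2 ≤ t) (h1 : t < 1) : haar 1 1 t = -1 := by
  have h2 : t ∉ dyadic 1 (2 * 1 - 1) := by
    simp only [dyadic, Set.mem_Ico, not_and_or, not_le, not_lt]
    right; push_cast; linarith
  have h3 : t ∈ dyadic 1 (2 * 1) := by
    simp only [dyadic, Set.mem_Ico]
    push_cast
    constructor <;> linarith
  unfold haar
  rw [if_neg h2, if_pos h3]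
  norm_num

lemma abs_haar_le (k : ℕ) (j : ℤ) (t : ℝ) : |haar k j t| ≤ (2 : ℝ) ^ (((k : ℝ) - 1) / 2) := by
  have h : (0:ℝ) < (2 : ℝ) ^ (((k : ℝ) - 1) / 2) := Real.rpow_pos_of_pos two_pos _
  unfold haar
  split_ifs <;> simp [abs_of_pos h, abs_neg, le_of_lt h]

lemma Ico_eq_biUnion (N : ℕ) :
    Set.Ico (0 : ℝ) 1 = ⋃ r ∈ Finset.range (2 ^ N), Set.Ico ((r : ℝ) / 2 ^ N) (((r : ℝ) + 1) / 2 ^ N) := by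
  have hP : (0:ℝ) < 2 ^ N := by positivity
  ext t
  simp only [Set.mem_iUnion, Set.mem_Ico, Finset.mem_range, exists_prop]
  constructor
  · rintro ⟨h0, h1⟩
    refine ⟨⌊t * 2 ^ N⌋₊, ?_, ?_, ?_⟩
    · rw [Nat.floor_lt (by positivity)]
      push_cast
      nlinarith
    · rw [div_le_iff₀ hP]
      exact Nat.floor_le (by positivity)
    · rw [lt_div_iff₀ hP]
      exact Nat.lt_floor_add_one _
  · rintro ⟨r, hr, h0, h1⟩
    constructor
    · exact le_trans (by positivity) h0
    · calc t < ((r:ℝ) + 1) / 2 ^ N := h1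
        _ ≤ 1 := by
          rw [div_le_one hP]
          have : (r:ℝ) + 1 ≤ ((2:ℝ)) ^ N := by
            have : (r + 1 : ℕ) ≤ 2 ^ N := hr
            calc (r:ℝ) + 1 = ((r + 1 : ℕ) : ℝ) := by push_cast; ring
              _ ≤ ((2 ^ N : ℕ) : ℝ) := by exact_mod_cast this
              _ = 2 ^ N := by push_cast; ring
          linarith

lemma disc_integral {g : ℝ → ℝ} (N : ℕ)
    (hg : ∀ r ∈ Finset.range (2 ^ N), ∀ t ∈ Set.Ico ((r : ℝ) / 2 ^ N) (((r : ℝ) + 1) / 2 ^ N),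
      g t = g ((r : ℝ) / 2 ^ N)) :
    ∫ t in Set.Ico (0 : ℝ) 1, g t
      = ((2 : ℝ) ^ N)⁻¹ * ∑ r ∈ Finset.range (2 ^ N), g ((r : ℝ) / 2 ^ N) := by
  have hP : (0:ℝ) < 2 ^ N := by positivity
  have hmeas : ∀ r ∈ Finset.range (2 ^ N),
      MeasurableSet (Set.Ico ((r : ℝ) / 2 ^ N) (((r : ℝ) + 1) / 2 ^ N)) :=
    fun r _ => measurableSet_Ico
  have key : ∀ {r r' : ℕ}, r < r' →
      Disjoint (Set.Ico ((r : ℝ) / 2 ^ N) (((r : ℝ) + 1) / 2 ^ N))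
        (Set.Ico ((r' : ℝ) / 2 ^ N) (((r' : ℝ) + 1) / 2 ^ N)) := by
    intro r r' h
    refine Set.Ico_disjoint_Ico.mpr ?_
    refine inf_le_of_left_le (le_sup_of_le_right ?_)
    refine (div_le_div_iff_of_pos_right hP).mpr ?_
    exact_mod_cast h
  have hdisj : (↑(Finset.range (2 ^ N)) : Set ℕ).Pairwise
      (Function.onFun Disjoint fun r : ℕ => Set.Ico ((r : ℝ) / 2 ^ N) (((r : ℝ) + 1) / 2 ^ N)) := by
    intro r _ r' _ hne
    simp only [Function.onFun]
    rcases lt_or_gt_of_ne hne with h | h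
    · exact key h
    · exact (key h).symm
  have hint : ∀ r ∈ Finset.range (2 ^ N),
      MeasureTheory.IntegrableOn g (Set.Ico ((r : ℝ) / 2 ^ N) (((r : ℝ) + 1) / 2 ^ N)) := by
    intro r hr
    refine MeasureTheory.IntegrableOn.congr_fun ?_ (fun t ht => (hg r hr t ht).symm)
      measurableSet_Ico
    exact MeasureTheory.integrableOn_const measure_Ico_lt_top.ne
  rw [Ico_eq_biUnion N, MeasureTheory.integral_biUnion_finset _ hmeas hdisj hint,
    Finset.mul_sum]
  refine Finset.sum_congr rfl fun r hr => ?_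
  rw [MeasureTheory.setIntegral_congr_fun measurableSet_Ico (hg r hr),
    MeasureTheory.setIntegral_const, MeasureTheory.measureReal_def, Real.volume_Ico, smul_eq_mul]
  have e : ((r:ℝ) + 1) / 2 ^ N - (r:ℝ) / 2 ^ N = (2 ^ N : ℝ)⁻¹ := by
    field_simp; ring
  rw [e, ENNReal.toReal_ofReal (by positivity)]

lemma dyadic_cell {N k : ℕ} (hk : k ≤ N) {i : ℤ} {r : ℕ} {t : ℝ}
    (ht : t ∈ Set.Ico ((r : ℝ) / 2 ^ N) (((r : ℝ) + 1) / 2 ^ N)) :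
    t ∈ dyadic k i ↔ (r : ℝ) / 2 ^ N ∈ dyadic k i := by
  obtain ⟨e, rfl⟩ : ∃ e, N = k + e := ⟨N - k, by omega⟩
  obtain ⟨h1, h2⟩ := ht
  have hPN : (0:ℝ) < 2 ^ (k+e) := by positivity
  have key : ∀ a : ℤ, ((a:ℝ) / 2 ^ k ≤ t ↔ (a:ℝ)/2^k ≤ (r:ℝ)/2^(k+e))
      ∧ (t < (a:ℝ)/2^k ↔ (r:ℝ)/2^(k+e) < (a:ℝ)/2^k) := by
    intro a
    have hae : (a:ℝ)/2^k = ((a * 2^e : ℤ) : ℝ) / 2^(k+e) := by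
      push_cast; rw [pow_add]; field_simp
    constructor
    · rw [hae]
      constructor
      · intro h
        have hlt : ((a * 2^e : ℤ):ℝ) < (r:ℝ) + 1 :=
          (div_lt_div_iff_of_pos_right hPN).mp (lt_of_le_of_lt h h2)
        have h' : (a * 2^e : ℤ) < (r:ℤ) + 1 := by exact_mod_cast hlt
        have h'' : (a * 2^e : ℤ) ≤ (r:ℤ) := by omega
        exact (div_le_div_iff_of_pos_right hPN).mpr (by exact_mod_cast h'')
      · intro h; exact le_trans h h1
    · rw [hae]
      constructor
      · intro h; exact lt_of_le_of_lt h1 h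
      · intro h
        have h' : (r:ℤ) < a * 2^e := by
          exact_mod_cast (div_lt_div_iff_of_pos_right hPN).mp h
        have h'' : ((r:ℤ) + 1 : ℤ) ≤ a * 2^e := by omega
        have h3 : (r:ℝ) + 1 ≤ ((a*2^e:ℤ):ℝ) := by exact_mod_cast h''
        exact lt_of_lt_of_le h2 ((div_le_div_iff_of_pos_right hPN).mpr h3)
  have k1 := (key (i - 1)).1
  have k2 := (key i).2
  push_cast at k1 k2
  simp only [dyadic, Set.mem_Ico]
  exact and_congr k1 k2

def Hsum {E : Type*} [NormedAddCommGroup E] [NormedSpace ℝ E]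
    (F : Finset (ℕ × ℤ)) (y : ℕ × ℤ → E) (t : ℝ) : E :=
  ∑ p ∈ F, haar p.1 p.2 t • y p

lemma Hsum_insert {E : Type*} [NormedAddCommGroup E] [NormedSpace ℝ E]
    {G : Finset (ℕ × ℤ)} {p₀ : ℕ × ℤ} (h : p₀ ∉ G) (y : ℕ × ℤ → E) (t : ℝ) :
    Hsum (insert p₀ G) y t = haar p₀.1 p₀.2 t • y p₀ + Hsum G y t :=
  Finset.sum_insert h

def FL (F : Finset (ℕ × ℤ)) : Finset (ℕ × ℤ) :=
  (F.filter fun p => p.2 ≤ 2 ^ (p.1 - 2)).image fun p => (p.1 - 1, p.2)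

def FR (F : Finset (ℕ × ℤ)) : Finset (ℕ × ℤ) :=
  (F.filter fun p => ¬ p.2 ≤ 2 ^ (p.1 - 2)).image fun p => (p.1 - 1, p.2 - 2 ^ (p.1 - 2))

def yL {E : Type*} [NormedAddCommGroup E] [NormedSpace ℝ E] (y : ℕ × ℤ → E) : ℕ × ℤ → E :=
  fun q => sq2 • y (q.1 + 1, q.2)

def yR {E : Type*} [NormedAddCommGroup E] [NormedSpace ℝ E] (y : ℕ × ℤ → E) : ℕ × ℤ → E :=
  fun q => sq2 • y (q.1 + 1, q.2 + 2 ^ (q.1 - 1))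

lemma FL_inj {G : Finset (ℕ × ℤ)} (hG : ∀ p ∈ G, 2 ≤ p.1) :
    ∀ p ∈ G.filter (fun p => p.2 ≤ 2 ^ (p.1 - 2)), ∀ q ∈ G.filter (fun p => p.2 ≤ 2 ^ (p.1 - 2)),
      (p.1 - 1, p.2) = (q.1 - 1, q.2) → p = q := by
  intro p hp q hq h
  have hp2 := hG p (Finset.mem_filter.mp hp).1
  have hq2 := hG q (Finset.mem_filter.mp hq).1
  rw [Prod.mk.injEq] at h
  obtain ⟨h1, h2⟩ := h
  exact Prod.ext (by omega) h2

lemma FR_inj {G : Finset (ℕ × ℤ)} (hG : ∀ p ∈ G, 2 ≤ p.1) :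
    ∀ p ∈ G.filter (fun p => ¬ p.2 ≤ 2 ^ (p.1 - 2)),
      ∀ q ∈ G.filter (fun p => ¬ p.2 ≤ 2 ^ (p.1 - 2)),
      (p.1 - 1, p.2 - 2 ^ (p.1 - 2)) = (q.1 - 1, q.2 - 2 ^ (q.1 - 2)) → p = q := by
  intro p hp q hq h
  have hp2 := hG p (Finset.mem_filter.mp hp).1
  have hq2 := hG q (Finset.mem_filter.mp hq).1
  rw [Prod.mk.injEq] at h
  obtain ⟨h1, h2⟩ := h
  have h1' : p.1 = q.1 := by omega
  rw [h1'] at h2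
  exact Prod.ext h1' (by omega)

lemma FL_memD {G : Finset (ℕ × ℤ)} (hG : ∀ p ∈ G, 2 ≤ p.1 ∧ memD p) :
    ∀ q ∈ FL G, memD q := by
  intro q hq
  obtain ⟨p, hp, rfl⟩ := Finset.mem_image.mp hq
  obtain ⟨hpG, hcond⟩ := Finset.mem_filter.mp hp
  obtain ⟨hp2, h1, h2, h3⟩ := hG p hpG
  refine ⟨by omega, h2, ?_⟩
  have e : p.1 - 1 - 1 = p.1 - 2 := by omega
  rw [e]
  exact hcond

lemma FR_memD {G : Finset (ℕ × ℤ)} (hG : ∀ p ∈ G, 2 ≤ p.1 ∧ memD p) :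
    ∀ q ∈ FR G, memD q := by
  intro q hq
  obtain ⟨p, hp, rfl⟩ := Finset.mem_image.mp hq
  obtain ⟨hpG, hcond⟩ := Finset.mem_filter.mp hp
  obtain ⟨hp2, h1, h2, h3⟩ := hG p hpG
  have e : p.1 - 1 - 1 = p.1 - 2 := by omega
  have e2 : p.1 - 1 = p.1 - 2 + 1 := by omega
  have hpow : (2:ℤ) ^ (p.1 - 1) = 2 ^ (p.1 - 2) * 2 := by rw [e2, pow_succ]
  refine ⟨by omega, by omega, ?_⟩
  simp only [e]
  rw [hpow] at h3
  omega

lemma FL_level {G : Finset (ℕ × ℤ)} {N : ℕ} (hG : ∀ p ∈ G, p.1 ≤ N + 1) :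
    ∀ q ∈ FL G, q.1 ≤ N := by
  intro q hq
  obtain ⟨p, hp, rfl⟩ := Finset.mem_image.mp hq
  have := hG p (Finset.mem_filter.mp hp).1
  simp only
  omega

lemma FR_level {G : Finset (ℕ × ℤ)} {N : ℕ} (hG : ∀ p ∈ G, p.1 ≤ N + 1) :
    ∀ q ∈ FR G, q.1 ≤ N := by
  intro q hq
  obtain ⟨p, hp, rfl⟩ := Finset.mem_image.mp hq
  have := hG p (Finset.mem_filter.mp hp).1
  simp only
  omega

lemma haar_vanish_right {p : ℕ × ℤ} (hp2 : 2 ≤ p.1) (hmemD : memD p)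
    (hcond : ¬ p.2 ≤ 2 ^ (p.1 - 2)) {s : ℝ} (hs1 : s < 1) :
    haar p.1 p.2 (s / 2) = 0 := by
  obtain ⟨c, hc⟩ : ∃ c, p.1 = c + 2 := ⟨p.1 - 2, by omega⟩
  have e : p.1 - 2 = c := by omega
  rw [e] at hcond
  have hb : (2:ℤ) ^ c + 1 ≤ p.2 := by
    have := not_le.mp hcond
    omega
  rw [hc, show c + 2 = (c + 1) + 1 from rfl]
  apply haar_supp
  intro hmem
  obtain ⟨hlow, _⟩ := hmem
  have hb' : (2:ℝ) ^ c ≤ (p.2:ℝ) - 1 := by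
    have : ((2:ℤ)^c : ℝ) + 1 ≤ (p.2 : ℝ) := by exact_mod_cast hb
    push_cast at this
    linarith
  have hhalf : (1:ℝ)/2 = (2:ℝ)^c / 2^(c+1) := by
    rw [pow_succ]; field_simp
  have hP : (0:ℝ) < 2^(c+1) := by positivity
  have : (2:ℝ)^c / 2^(c+1) ≤ ((p.2:ℝ) - 1) / 2^(c+1) :=
    (div_le_div_iff_of_pos_right hP).mpr hb'
  rw [← hhalf] at this
  linarith

lemma haar_vanish_left {p : ℕ × ℤ} (hp2 : 2 ≤ p.1) (hmemD : memD p)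
    (hcond : p.2 ≤ 2 ^ (p.1 - 2)) {s : ℝ} (hs0 : 0 ≤ s) :
    haar p.1 p.2 ((s + 1) / 2) = 0 := by
  obtain ⟨c, hc⟩ : ∃ c, p.1 = c + 2 := ⟨p.1 - 2, by omega⟩
  have e : p.1 - 2 = c := by omega
  rw [e] at hcond
  rw [hc, show c + 2 = (c + 1) + 1 from rfl]
  apply haar_supp
  intro hmem
  obtain ⟨_, hup⟩ := hmem
  have hb' : (p.2:ℝ) ≤ (2:ℝ) ^ c := by exact_mod_cast hcond
  have hhalf : (1:ℝ)/2 = (2:ℝ)^c / 2^(c+1) := by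
    rw [pow_succ]; field_simp
  have hP : (0:ℝ) < 2^(c+1) := by positivity
  have : (p.2:ℝ) / 2^(c+1) ≤ (2:ℝ)^c / 2^(c+1) :=
    (div_le_div_iff_of_pos_right hP).mpr hb'
  rw [← hhalf] at this
  linarith

variable {E : Type*} [NormedAddCommGroup E] [NormedSpace ℝ E]

lemma Hsum_left {G : Finset (ℕ × ℤ)} (hG : ∀ p ∈ G, 2 ≤ p.1 ∧ memD p) (y : ℕ × ℤ → E)
    {s : ℝ} (hs1 : s < 1) :
    Hsum G y (s / 2) = Hsum (FL G) (yL y) s := by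
  unfold Hsum FL
  rw [Finset.sum_image (FL_inj (fun p hp => (hG p hp).1))]
  rw [← Finset.sum_filter_add_sum_filter_not G (fun p => p.2 ≤ 2 ^ (p.1 - 2))
      (fun p => haar p.1 p.2 (s/2) • y p)]
  have hz : ∑ p ∈ G.filter (fun p => ¬ p.2 ≤ 2 ^ (p.1 - 2)), haar p.1 p.2 (s/2) • y p = 0 := by
    refine Finset.sum_eq_zero fun p hp => ?_
    obtain ⟨hpG, hcond⟩ := Finset.mem_filter.mp hp
    obtain ⟨hp2, hmemD⟩ := hG p hpG
    rw [haar_vanish_right hp2 hmemD hcond hs1, zero_smul]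
  rw [hz, add_zero]
  refine Finset.sum_congr rfl fun p hp => ?_
  obtain ⟨hpG, hcond⟩ := Finset.mem_filter.mp hp
  obtain ⟨hp2, hmemD⟩ := hG p hpG
  obtain ⟨c, hc⟩ : ∃ c, p.1 = c + 1 := ⟨p.1 - 1, by omega⟩
  simp only [yL]
  have hpair : ((p.1 - 1 + 1, p.2) : ℕ × ℤ) = p := by
    rw [show p.1 - 1 + 1 = p.1 by omega]
  rw [hpair]
  have e : p.1 - 1 = c := by omega
  rw [e, hc, haar_half, mul_smul, smul_comm]

lemma Hsum_right {G : Finset (ℕ × ℤ)} (hG : ∀ p ∈ G, 2 ≤ p.1 ∧ memD p) (y : ℕ × ℤ → E)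
    {s : ℝ} (hs0 : 0 ≤ s) :
    Hsum G y ((s + 1) / 2) = Hsum (FR G) (yR y) s := by
  unfold Hsum FR
  rw [Finset.sum_image (FR_inj (fun p hp => (hG p hp).1))]
  rw [← Finset.sum_filter_add_sum_filter_not G (fun p => p.2 ≤ 2 ^ (p.1 - 2))
      (fun p => haar p.1 p.2 ((s+1)/2) • y p)]
  have hz : ∑ p ∈ G.filter (fun p => p.2 ≤ 2 ^ (p.1 - 2)), haar p.1 p.2 ((s+1)/2) • y p = 0 := by
    refine Finset.sum_eq_zero fun p hp => ?_
    obtain ⟨hpG, hcond⟩ := Finset.mem_filter.mp hp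
    obtain ⟨hp2, hmemD⟩ := hG p hpG
    rw [haar_vanish_left hp2 hmemD hcond hs0, zero_smul]
  rw [hz, zero_add]
  refine Finset.sum_congr rfl fun p hp => ?_
  obtain ⟨hpG, hcond⟩ := Finset.mem_filter.mp hp
  obtain ⟨hp2, hmemD⟩ := hG p hpG
  obtain ⟨c, hc⟩ : ∃ c, p.1 = c + 2 := ⟨p.1 - 2, by omega⟩
  simp only [yR]
  have e1 : p.1 - 1 = c + 1 := by omega
  have e2 : p.1 - 2 = c := by omega
  have e3 : p.1 - 1 + 1 = p.1 := by omega
  have hpair : ((p.1 - 1 + 1, p.2 - 2 ^ (p.1 - 2) + 2 ^ (p.1 - 1 - 1)) : ℕ × ℤ) = p := by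
    rw [e3]
    have : p.2 - 2 ^ (p.1 - 2) + 2 ^ (p.1 - 1 - 1) = p.2 := by
      rw [show p.1 - 1 - 1 = p.1 - 2 by omega]; ring
    rw [this]
  rw [hpair, e1, e2, hc, haar_half_right, mul_smul, smul_comm]

lemma sum_sq_FL {G : Finset (ℕ × ℤ)} (hG : ∀ p ∈ G, 2 ≤ p.1 ∧ memD p) (x : ℕ × ℤ → E) :
    ∑ q ∈ FL G, ‖yL x q‖ ^ 2 = 2 * ∑ p ∈ G.filter (fun p => p.2 ≤ 2 ^ (p.1 - 2)), ‖x p‖ ^ 2 := by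
  unfold FL
  rw [Finset.sum_image (FL_inj (fun p hp => (hG p hp).1)), Finset.mul_sum]
  refine Finset.sum_congr rfl fun p hp => ?_
  obtain ⟨hpG, _⟩ := Finset.mem_filter.mp hp
  have hp2 := (hG p hpG).1
  simp only [yL]
  have hpair : ((p.1 - 1 + 1, p.2) : ℕ × ℤ) = p := by
    rw [show p.1 - 1 + 1 = p.1 by omega]
  rw [hpair, norm_sq2_smul]

lemma sum_sq_FR {G : Finset (ℕ × ℤ)} (hG : ∀ p ∈ G, 2 ≤ p.1 ∧ memD p) (x : ℕ × ℤ → E) :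
    ∑ q ∈ FR G, ‖yR x q‖ ^ 2
      = 2 * ∑ p ∈ G.filter (fun p => ¬ p.2 ≤ 2 ^ (p.1 - 2)), ‖x p‖ ^ 2 := by
  unfold FR
  rw [Finset.sum_image (FR_inj (fun p hp => (hG p hp).1)), Finset.mul_sum]
  refine Finset.sum_congr rfl fun p hp => ?_
  obtain ⟨hpG, _⟩ := Finset.mem_filter.mp hp
  have hp2 := (hG p hpG).1
  simp only [yR]
  have hpair : ((p.1 - 1 + 1, p.2 - 2 ^ (p.1 - 2) + 2 ^ (p.1 - 1 - 1)) : ℕ × ℤ) = p := by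
    rw [show p.1 - 1 + 1 = p.1 by omega]
    have : p.2 - 2 ^ (p.1 - 2) + 2 ^ (p.1 - 1 - 1) = p.2 := by
      rw [show p.1 - 1 - 1 = p.1 - 2 by omega]; ring
    rw [this]
  rw [hpair, norm_sq2_smul]

lemma sum_range_two_pow (M : ℕ) (f : ℕ → ℝ) :
    ∑ r ∈ Finset.range (2 ^ (M + 1)), f r
      = ∑ r ∈ Finset.range (2 ^ M), f r + ∑ r ∈ Finset.range (2 ^ M), f (2 ^ M + r) := by
  have h : 2 ^ (M + 1) = 2 ^ M + 2 ^ M := by omega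
  rw [h, Finset.range_add, Finset.sum_union, Finset.sum_map]
  · rfl
  · simp only [Finset.disjoint_left, Finset.mem_range, Finset.mem_map, addLeftEmbedding_apply]
    rintro a ha ⟨b, hb, rfl⟩
    omega

lemma Hsum_congr' {F : Finset (ℕ × ℤ)} {y y' : ℕ × ℤ → E} (h : ∀ p ∈ F, y p = y' p) (t : ℝ) :
    Hsum F y t = Hsum F y' t :=
  Finset.sum_congr rfl fun p hp => by rw [h p hp]

lemma Hsum_cell {N : ℕ} {F : Finset (ℕ × ℤ)} (hF : ∀ p ∈ F, p.1 ≤ N) (y : ℕ × ℤ → E)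
    {r : ℕ} {t : ℝ} (ht : t ∈ Set.Ico ((r : ℝ) / 2 ^ N) (((r : ℝ) + 1) / 2 ^ N)) :
    Hsum F y t = Hsum F y ((r : ℝ) / 2 ^ N) := by
  refine Finset.sum_congr rfl fun p hp => ?_
  have : haar p.1 p.2 t = haar p.1 p.2 ((r:ℝ)/2^N) := by
    unfold haar
    rw [if_congr (dyadic_cell (hF p hp) ht) rfl (if_congr (dyadic_cell (hF p hp) ht) rfl rfl)]
  rw [this]

lemma haar_cell1 {N : ℕ} (hN : 1 ≤ N) (j : ℤ) {r : ℕ} {t : ℝ}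
    (ht : t ∈ Set.Ico ((r : ℝ) / 2 ^ N) (((r : ℝ) + 1) / 2 ^ N)) :
    haar 1 j t = haar 1 j ((r : ℝ) / 2 ^ N) := by
  unfold haar
  rw [if_congr (dyadic_cell hN ht) rfl (if_congr (dyadic_cell hN ht) rfl rfl)]

lemma split {G : Finset (ℕ × ℤ)} (hG : ∀ p ∈ G, 2 ≤ p.1 ∧ memD p) (y : ℕ × ℤ → E) (v w : E) :
    ∫ t in Set.Ico (0 : ℝ) 1, ‖w + (haar 1 1 t • v + Hsum G y t)‖ ^ 2
      = (1 / 2) * (∫ s in Set.Ico (0 : ℝ) 1, ‖(w + v) + Hsum (FL G) (yL y) s‖ ^ 2)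
        + (1 / 2) * (∫ s in Set.Ico (0 : ℝ) 1, ‖(w - v) + Hsum (FR G) (yR y) s‖ ^ 2) := by
  set N := max (G.sup (fun p => p.1)) 1 with hNdef
  obtain ⟨M, hM⟩ : ∃ M, N = M + 1 := ⟨N - 1, by omega⟩
  have hN1 : 1 ≤ N := le_max_right _ _
  have hlev : ∀ p ∈ G, p.1 ≤ N := fun p hp =>
    le_trans (Finset.le_sup (f := fun p : ℕ × ℤ => p.1) hp) (le_max_left _ _)
  have hlevL : ∀ q ∈ FL G, q.1 ≤ M := FL_level (fun p hp => by have := hlev p hp; omega)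
  have hlevR : ∀ q ∈ FR G, q.1 ≤ M := FR_level (fun p hp => by have := hlev p hp; omega)
  have hPM : (0:ℝ) < 2 ^ M := by positivity
  -- convert all three integrals to discrete sums
  have e1 : (∫ t in Set.Ico (0:ℝ) 1, ‖w + (haar 1 1 t • v + Hsum G y t)‖ ^ 2)
      = ((2:ℝ)^N)⁻¹ * ∑ r ∈ Finset.range (2^N),
          ‖w + (haar 1 1 ((r:ℝ)/2^N) • v + Hsum G y ((r:ℝ)/2^N))‖ ^ 2 := by
    refine disc_integral N fun r hr t ht => ?_
    show ‖w + (haar 1 1 t • v + Hsum G y t)‖ ^ 2 = _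
    rw [Hsum_cell hlev y ht, haar_cell1 hN1 1 ht]
  have e2 : (∫ s in Set.Ico (0:ℝ) 1, ‖(w + v) + Hsum (FL G) (yL y) s‖ ^ 2)
      = ((2:ℝ)^M)⁻¹ * ∑ r ∈ Finset.range (2^M),
          ‖(w + v) + Hsum (FL G) (yL y) ((r:ℝ)/2^M)‖ ^ 2 := by
    refine disc_integral M fun r hr t ht => ?_
    show ‖(w + v) + Hsum (FL G) (yL y) t‖ ^ 2 = _
    rw [Hsum_cell hlevL (yL y) ht]
  have e3 : (∫ s in Set.Ico (0:ℝ) 1, ‖(w - v) + Hsum (FR G) (yR y) s‖ ^ 2)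
      = ((2:ℝ)^M)⁻¹ * ∑ r ∈ Finset.range (2^M),
          ‖(w - v) + Hsum (FR G) (yR y) ((r:ℝ)/2^M)‖ ^ 2 := by
    refine disc_integral M fun r hr t ht => ?_
    show ‖(w - v) + Hsum (FR G) (yR y) t‖ ^ 2 = _
    rw [Hsum_cell hlevR (yR y) ht]
  rw [e1, e2, e3]
  -- split the big sum
  rw [hM, sum_range_two_pow]
  have hc1 : ∀ r ∈ Finset.range (2 ^ M),
      ‖w + (haar 1 1 ((r:ℝ) / 2 ^ (M+1)) • v + Hsum G y ((r:ℝ) / 2 ^ (M+1)))‖ ^ 2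
        = ‖(w + v) + Hsum (FL G) (yL y) ((r:ℝ) / 2 ^ M)‖ ^ 2 := by
    intro r hr
    have hrlt : (r:ℝ) < 2 ^ M := by exact_mod_cast Finset.mem_range.mp hr
    have hs0 : 0 ≤ (r:ℝ) / 2 ^ M := by positivity
    have hs1 : (r:ℝ) / 2 ^ M < 1 := (div_lt_one hPM).mpr hrlt
    have he : (r:ℝ) / 2 ^ (M+1) = ((r:ℝ) / 2 ^ M) / 2 := by
      rw [pow_succ]; field_simp
    rw [he, haar_one_left (by positivity) (by linarith), Hsum_left hG y hs1, one_smul,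
      ← add_assoc]
  have hc2 : ∀ r ∈ Finset.range (2 ^ M),
      ‖w + (haar 1 1 (((2 ^ M + r : ℕ):ℝ) / 2 ^ (M+1)) • v
          + Hsum G y (((2 ^ M + r : ℕ):ℝ) / 2 ^ (M+1)))‖ ^ 2
        = ‖(w - v) + Hsum (FR G) (yR y) ((r:ℝ) / 2 ^ M)‖ ^ 2 := by
    intro r hr
    have hrlt : (r:ℝ) < 2 ^ M := by exact_mod_cast Finset.mem_range.mp hr
    have hs0 : 0 ≤ (r:ℝ) / 2 ^ M := by positivity
    have hs1 : (r:ℝ) / 2 ^ M < 1 := (div_lt_one hPM).mpr hrlt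
    have he : ((2 ^ M + r : ℕ):ℝ) / 2 ^ (M+1) = ((r:ℝ) / 2 ^ M + 1) / 2 := by
      push_cast
      rw [pow_succ]; field_simp; ring
    have hhalf : 1 / 2 ≤ ((r:ℝ) / 2 ^ M + 1) / 2 := by linarith
    have hone : ((r:ℝ) / 2 ^ M + 1) / 2 < 1 := by linarith
    rw [he, haar_one_right hhalf hone, Hsum_right hG y hs0, neg_one_smul, ← add_assoc,
      ← sub_eq_add_neg]
  rw [Finset.sum_congr rfl hc1, Finset.sum_congr rfl hc2]
  have hfin : ∀ A B : ℝ, ((2:ℝ)^(M+1))⁻¹ * (A + B)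
      = 1/2 * (((2:ℝ)^M)⁻¹ * A) + 1/2 * (((2:ℝ)^M)⁻¹ * B) := by
    intro A B
    rw [pow_succ, mul_inv]
    ring
  exact hfin _ _

lemma not_mem_dyadic_right {p : ℕ × ℤ} (hp2 : 2 ≤ p.1)
    (hcond : ¬ p.2 ≤ 2 ^ (p.1 - 2)) {s : ℝ} (hs1 : s < 1) :
    s / 2 ∉ dyadic (p.1 - 1) p.2 := by
  obtain ⟨c, hc⟩ : ∃ c, p.1 = c + 2 := ⟨p.1 - 2, by omega⟩
  have e : p.1 - 2 = c := by omega
  rw [e] at hcond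
  have hb : (2:ℤ) ^ c + 1 ≤ p.2 := by have := not_le.mp hcond; omega
  rw [show p.1 - 1 = c + 1 by omega]
  intro hmem
  obtain ⟨hlow, _⟩ := hmem
  have hb' : (2:ℝ) ^ c ≤ (p.2:ℝ) - 1 := by
    have : ((2:ℤ)^c : ℝ) + 1 ≤ (p.2 : ℝ) := by exact_mod_cast hb
    push_cast at this; linarith
  have hhalf : (1:ℝ)/2 = (2:ℝ)^c / 2^(c+1) := by rw [pow_succ]; field_simp
  have hP : (0:ℝ) < 2^(c+1) := by positivity
  have : (2:ℝ)^c / 2^(c+1) ≤ ((p.2:ℝ) - 1) / 2^(c+1) :=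
    (div_le_div_iff_of_pos_right hP).mpr hb'
  rw [← hhalf] at this
  linarith

lemma not_mem_dyadic_left {p : ℕ × ℤ} (hp2 : 2 ≤ p.1)
    (hcond : p.2 ≤ 2 ^ (p.1 - 2)) {s : ℝ} (hs0 : 0 ≤ s) :
    (s + 1) / 2 ∉ dyadic (p.1 - 1) p.2 := by
  obtain ⟨c, hc⟩ : ∃ c, p.1 = c + 2 := ⟨p.1 - 2, by omega⟩
  have e : p.1 - 2 = c := by omega
  rw [e] at hcond
  rw [show p.1 - 1 = c + 1 by omega]
  intro hmem
  obtain ⟨_, hup⟩ := hmem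
  have hb' : (p.2:ℝ) ≤ (2:ℝ) ^ c := by exact_mod_cast hcond
  have hhalf : (1:ℝ)/2 = (2:ℝ)^c / 2^(c+1) := by rw [pow_succ]; field_simp
  have hP : (0:ℝ) < 2^(c+1) := by positivity
  have : (p.2:ℝ) / 2^(c+1) ≤ (2:ℝ)^c / 2^(c+1) :=
    (div_le_div_iff_of_pos_right hP).mpr hb'
  rw [← hhalf] at this
  linarith

lemma branchCount_le_lh {F : Finset (ℕ × ℤ)} {t : ℝ} (ht : t ∈ Set.Ico (0 : ℝ) 1) :
    branchCount F t ≤ lh F := by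
  refine le_csSup ⟨F.card, ?_⟩ ⟨t, ht, rfl⟩
  rintro m ⟨t', _, rfl⟩
  exact Finset.card_filter_le _ _

lemma lh_le {F : Finset (ℕ × ℤ)} {n : ℕ}
    (h : ∀ t ∈ Set.Ico (0 : ℝ) 1, branchCount F t ≤ n) : lh F ≤ n := by
  refine csSup_le ⟨branchCount F 0, 0, by norm_num, rfl⟩ ?_
  rintro m ⟨t, ht, rfl⟩
  exact h t ht

lemma branchCount_FL {G : Finset (ℕ × ℤ)} (hG : ∀ p ∈ G, 2 ≤ p.1 ∧ memD p)
    {s : ℝ} (hs1 : s < 1) : branchCount (FL G) s = branchCount G (s / 2) := by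
  unfold branchCount FL
  rw [Finset.filter_image]
  rw [Finset.card_image_of_injOn (fun p hp q hq h =>
    FL_inj (fun a ha => (hG a ha).1) p (Finset.mem_filter.mp (Finset.mem_coe.mp hp)).1
      q (Finset.mem_filter.mp (Finset.mem_coe.mp hq)).1 h)]
  have hzero : (G.filter (fun p => s/2 ∈ dyadic (p.1-1) p.2)).filter
      (fun p => ¬ p.2 ≤ 2^(p.1-2)) = ∅ := by
    refine Finset.filter_eq_empty_iff.mpr fun p hp => ?_
    obtain ⟨hpG, hQ⟩ := Finset.mem_filter.mp hp
    intro hcond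
    exact (not_mem_dyadic_right (hG p hpG).1 hcond hs1) hQ
  have hsplit := Finset.card_filter_add_card_filter_not
    (s := G.filter (fun p => s/2 ∈ dyadic (p.1-1) p.2)) (p := fun p => p.2 ≤ 2^(p.1-2))
  rw [hzero, Finset.card_empty, add_zero] at hsplit
  rw [← hsplit, Finset.filter_comm (fun p => s/2 ∈ dyadic (p.1-1) p.2)
    (fun p => p.2 ≤ 2^(p.1-2)) G]
  congr 1
  refine Finset.filter_congr fun p hp => ?_
  obtain ⟨hpG, hcond⟩ := Finset.mem_filter.mp hp
  have hp2 := (hG p hpG).1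
  obtain ⟨c, hc⟩ : ∃ c, p.1 = c + 2 := ⟨p.1 - 2, by omega⟩
  show s ∈ dyadic ((p.1 - 1, p.2).1 - 1) (p.1 - 1, p.2).2 ↔ s/2 ∈ dyadic (p.1 - 1) p.2
  rw [show ((p.1 - 1, p.2) : ℕ × ℤ).1 - 1 = c by simp; omega,
    show ((p.1 - 1, p.2) : ℕ × ℤ).2 = p.2 from rfl,
    show p.1 - 1 = c + 1 by omega]
  exact dyadic_double.symm

lemma branchCount_FR {G : Finset (ℕ × ℤ)} (hG : ∀ p ∈ G, 2 ≤ p.1 ∧ memD p)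
    {s : ℝ} (hs0 : 0 ≤ s) : branchCount (FR G) s = branchCount G ((s + 1) / 2) := by
  unfold branchCount FR
  rw [Finset.filter_image]
  rw [Finset.card_image_of_injOn (fun p hp q hq h =>
    FR_inj (fun a ha => (hG a ha).1) p (Finset.mem_filter.mp (Finset.mem_coe.mp hp)).1
      q (Finset.mem_filter.mp (Finset.mem_coe.mp hq)).1 h)]
  have hzero : (G.filter (fun p => (s+1)/2 ∈ dyadic (p.1-1) p.2)).filter
      (fun p => p.2 ≤ 2^(p.1-2)) = ∅ := by
    refine Finset.filter_eq_empty_iff.mpr fun p hp => ?_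
    obtain ⟨hpG, hQ⟩ := Finset.mem_filter.mp hp
    intro hcond
    exact (not_mem_dyadic_left (hG p hpG).1 hcond hs0) hQ
  have hsplit := Finset.card_filter_add_card_filter_not
    (s := G.filter (fun p => (s+1)/2 ∈ dyadic (p.1-1) p.2)) (p := fun p => p.2 ≤ 2^(p.1-2))
  rw [hzero, Finset.card_empty, zero_add] at hsplit
  rw [← hsplit, Finset.filter_comm (fun p => (s+1)/2 ∈ dyadic (p.1-1) p.2)
    (fun p => ¬ p.2 ≤ 2^(p.1-2)) G]
  congr 1
  refine Finset.filter_congr fun p hp => ?_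
  obtain ⟨hpG, hcond⟩ := Finset.mem_filter.mp hp
  have hp2 := (hG p hpG).1
  obtain ⟨c, hc⟩ : ∃ c, p.1 = c + 2 := ⟨p.1 - 2, by omega⟩
  show s ∈ dyadic ((p.1 - 1, p.2 - 2^(p.1-2)).1 - 1) (p.1 - 1, p.2 - 2^(p.1-2)).2
    ↔ (s+1)/2 ∈ dyadic (p.1 - 1) p.2
  rw [show ((p.1 - 1, p.2 - 2^(p.1-2)) : ℕ × ℤ).1 - 1 = c by simp; omega,
    show ((p.1 - 1, p.2 - 2^(p.1-2)) : ℕ × ℤ).2 = p.2 - 2^(p.1-2) from rfl,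
    show p.1 - 1 = c + 1 by omega, show p.1 - 2 = c by omega]
  exact dyadic_shift.symm

lemma branchCount_root {F : Finset (ℕ × ℤ)} (h : (1, (1:ℤ)) ∈ F) {t : ℝ}
    (ht : t ∈ Set.Ico (0 : ℝ) 1) :
    branchCount F t = branchCount (F.erase (1, 1)) t + 1 := by
  unfold branchCount
  rw [Finset.filter_erase]
  have hmem : ((1, (1:ℤ)) : ℕ × ℤ) ∈ F.filter (fun kj => t ∈ dyadic (kj.1 - 1) kj.2) := by
    refine Finset.mem_filter.mpr ⟨h, ?_⟩
    show t ∈ dyadic 0 1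
    simp only [dyadic, Set.mem_Ico]
    push_cast
    norm_num
    exact ht
  rw [Finset.card_erase_of_mem hmem]
  have : 1 ≤ (F.filter (fun kj => t ∈ dyadic (kj.1 - 1) kj.2)).card :=
    Finset.card_pos.mpr ⟨_, hmem⟩
  omega

lemma mem_Dtree {a b : ℕ} {p : ℕ × ℤ} :
    p ∈ Dtree a b ↔ a ≤ p.1 ∧ p.1 ≤ b ∧ 1 ≤ p.2 ∧ p.2 ≤ 2 ^ (p.1 - 1) := by
  unfold Dtree
  simp only [Finset.mem_biUnion, Finset.mem_Icc, Finset.mem_image]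
  constructor
  · rintro ⟨k, ⟨hk1, hk2⟩, j, ⟨hj1, hj2⟩, rfl⟩
    exact ⟨hk1, hk2, hj1, hj2⟩
  · rintro ⟨h1, h2, h3, h4⟩
    exact ⟨p.1, ⟨h1, h2⟩, p.2, ⟨h3, h4⟩, rfl⟩

lemma Dtree_memD {a b : ℕ} (ha : 1 ≤ a) : ∀ p ∈ Dtree a b, memD p := by
  intro p hp
  obtain ⟨h1, h2, h3, h4⟩ := mem_Dtree.mp hp
  exact ⟨by omega, h3, h4⟩

lemma Dtree_levels {a b : ℕ} : ∀ p ∈ Dtree a b, p.1 ≤ b :=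
  fun p hp => (mem_Dtree.mp hp).2.1

lemma Dtree_root (m : ℕ) : Dtree 1 (m + 1) = insert (1, 1) (Dtree 2 (m + 1)) := by
  ext p
  simp only [Finset.mem_insert, mem_Dtree]
  constructor
  · rintro ⟨h1, h2, h3, h4⟩
    by_cases hp1 : p.1 = 1
    · left
      have : p.2 ≤ 1 := by
        have : (2:ℤ) ^ (p.1 - 1) = 1 := by rw [hp1]; decide
        omega
      have hp2 : p.2 = 1 := by omega
      exact Prod.ext hp1 hp2
    · right; exact ⟨by omega, h2, h3, h4⟩
  · rintro (rfl | ⟨h1, h2, h3, h4⟩)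
    · refine ⟨le_refl 1, by omega, le_refl 1, ?_⟩
      show (1:ℤ) ≤ 2 ^ (1 - 1 : ℕ)
      norm_num
    · exact ⟨by omega, h2, h3, h4⟩

lemma root_not_mem_Dtree2 (m : ℕ) : ((1 : ℕ), (1 : ℤ)) ∉ Dtree 2 m := by
  intro h
  have := (mem_Dtree.mp h).1
  omega

lemma Dtree2_levels (m : ℕ) : ∀ p ∈ Dtree 2 m, 2 ≤ p.1 ∧ memD p := by
  intro p hp
  obtain ⟨h1, h2, h3, h4⟩ := mem_Dtree.mp hp
  exact ⟨h1, by omega, h3, h4⟩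

lemma FL_Dtree (m : ℕ) : FL (Dtree 2 (m + 1)) = Dtree 1 m := by
  ext q
  unfold FL
  simp only [Finset.mem_image, Finset.mem_filter, mem_Dtree]
  constructor
  · rintro ⟨p, ⟨⟨h1, h2, h3, h4⟩, hcond⟩, rfl⟩
    refine ⟨by omega, by omega, h3, ?_⟩
    show p.2 ≤ 2 ^ (p.1 - 1 - 1)
    rw [show p.1 - 1 - 1 = p.1 - 2 by omega]
    exact hcond
  · rintro ⟨h1, h2, h3, h4⟩
    refine ⟨(q.1 + 1, q.2), ⟨⟨by omega, by omega, h3, ?_⟩, ?_⟩, ?_⟩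
    · show q.2 ≤ 2 ^ (q.1 + 1 - 1)
      calc q.2 ≤ 2 ^ (q.1 - 1) := h4
        _ ≤ 2 ^ (q.1 + 1 - 1) := by
          apply pow_le_pow_right₀ (by norm_num)
          omega
    · show q.2 ≤ 2 ^ (q.1 + 1 - 2)
      rw [show q.1 + 1 - 2 = q.1 - 1 by omega]
      exact h4
    · show ((q.1 + 1 - 1, q.2) : ℕ × ℤ) = q
      rw [show q.1 + 1 - 1 = q.1 by omega]

lemma FR_Dtree (m : ℕ) : FR (Dtree 2 (m + 1)) = Dtree 1 m := by
  ext q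
  unfold FR
  simp only [Finset.mem_image, Finset.mem_filter, mem_Dtree]
  constructor
  · rintro ⟨p, ⟨⟨h1, h2, h3, h4⟩, hcond⟩, rfl⟩
    have e2 : p.1 - 1 = p.1 - 2 + 1 := by omega
    have hpow : (2:ℤ) ^ (p.1 - 1) = 2 ^ (p.1 - 2) * 2 := by rw [e2, pow_succ]
    refine ⟨by omega, by omega, by omega, ?_⟩
    show p.2 - 2 ^ (p.1 - 2) ≤ 2 ^ (p.1 - 1 - 1)
    rw [show p.1 - 1 - 1 = p.1 - 2 by omega]
    omega
  · rintro ⟨h1, h2, h3, h4⟩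
    have hpow : (2:ℤ) ^ (q.1 + 1 - 1) = 2 ^ (q.1 - 1) * 2 := by
      rw [show q.1 + 1 - 1 = (q.1 - 1) + 1 by omega, pow_succ]
    refine ⟨(q.1 + 1, q.2 + 2 ^ (q.1 - 1)), ⟨⟨by omega, by omega, ?_, ?_⟩, ?_⟩, ?_⟩
    · show 1 ≤ q.2 + 2 ^ (q.1 - 1)
      have : (0:ℤ) < 2 ^ (q.1 - 1) := by positivity
      omega
    · show q.2 + 2 ^ (q.1 - 1) ≤ 2 ^ (q.1 + 1 - 1)
      omega
    · show ¬ q.2 + 2 ^ (q.1 - 1) ≤ 2 ^ (q.1 + 1 - 2)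
      rw [show q.1 + 1 - 2 = q.1 - 1 by omega]
      omega
    · show ((q.1 + 1 - 1, q.2 + 2 ^ (q.1 - 1) - 2 ^ (q.1 + 1 - 2)) : ℕ × ℤ) = q
      rw [show q.1 + 1 - 1 = q.1 by omega, show q.1 + 1 - 2 = q.1 - 1 by omega]
      have : q.2 + 2 ^ (q.1 - 1) - 2 ^ (q.1 - 1) = q.2 := by ring
      rw [this]

lemma mix {ι₁ ι₂ : Type*} (s₁ : Finset ι₁) (s₂ : Finset ι₂) (α : ι₁ → ℝ) (β : ι₂ → ℝ)
    (P : ι₁ → ℝ) (Q : ι₂ → ℝ) (C : ℝ) (hα : ∑ i ∈ s₁, α i = 1) (hβ : ∑ j ∈ s₂, β j = 1) :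
    ∑ ij ∈ s₁ ×ˢ s₂, (α ij.1 * β ij.2) * (C + (1 / 2) * P ij.1 + (1 / 2) * Q ij.2)
      = C + (1 / 2) * ∑ i ∈ s₁, α i * P i + (1 / 2) * ∑ j ∈ s₂, β j * Q j := by
  have e : ∀ i ∈ s₁, (∑ j ∈ s₂, (α i * β j) * (C + (1/2) * P i + (1/2) * Q j))
      = (α i * (C + (1/2) * P i)) + (α i * (1/2)) * (∑ j ∈ s₂, β j * Q j) := by
    intro i _
    rw [Finset.sum_congr rfl (fun j _ =>
      show (α i * β j) * (C + (1/2) * P i + (1/2) * Q j)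
        = (α i * (C + (1/2) * P i)) * β j + (α i * (1/2)) * (β j * Q j) from by ring)]
    rw [Finset.sum_add_distrib, ← Finset.mul_sum, ← Finset.mul_sum, hβ, mul_one]
  rw [Finset.sum_product, Finset.sum_congr rfl e, Finset.sum_add_distrib,
    ← Finset.sum_mul]
  rw [Finset.sum_congr rfl (fun i (_ : i ∈ s₁) =>
    show α i * (C + (1/2) * P i) = α i * C + (1/2) * (α i * P i) from by ring)]
  rw [Finset.sum_add_distrib, ← Finset.sum_mul, ← Finset.mul_sum, hα, one_mul,
    ← Finset.sum_mul, hα, one_mul]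

variable {X Y : Type*} [NormedAddCommGroup X] [NormedSpace ℝ X]
  [NormedAddCommGroup Y] [NormedSpace ℝ Y]

def reasm (x₀ : X) (bb cc : ℕ × ℤ → X) (q : ℕ × ℤ) : X :=
  if q = (1, 1) then x₀
  else if q.2 ≤ 2 ^ (q.1 - 2) then sq2⁻¹ • bb (q.1 - 1, q.2)
  else sq2⁻¹ • cc (q.1 - 1, q.2 - 2 ^ (q.1 - 2))

lemma reasm_root (x₀ : X) (bb cc : ℕ × ℤ → X) : reasm x₀ bb cc (1, 1) = x₀ := by
  unfold reasm; rw [if_pos rfl]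

lemma reasm_left {q : ℕ × ℤ} (h1 : 1 ≤ q.1) (h4 : q.2 ≤ 2 ^ (q.1 - 1))
    (x₀ : X) (bb cc : ℕ × ℤ → X) : reasm x₀ bb cc (q.1 + 1, q.2) = sq2⁻¹ • bb q := by
  unfold reasm
  rw [if_neg (by rw [Prod.mk.injEq]; intro ⟨h, _⟩; omega)]
  rw [if_pos (by show q.2 ≤ 2 ^ (q.1 + 1 - 2); rw [show q.1 + 1 - 2 = q.1 - 1 by omega]; exact h4)]
  show sq2⁻¹ • bb (q.1 + 1 - 1, q.2) = sq2⁻¹ • bb q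
  rw [show q.1 + 1 - 1 = q.1 by omega]

lemma reasm_right {q : ℕ × ℤ} (h1 : 1 ≤ q.1) (h3 : 1 ≤ q.2)
    (x₀ : X) (bb cc : ℕ × ℤ → X) :
    reasm x₀ bb cc (q.1 + 1, q.2 + 2 ^ (q.1 - 1)) = sq2⁻¹ • cc q := by
  unfold reasm
  rw [if_neg (by rw [Prod.mk.injEq]; intro ⟨h, _⟩; omega)]
  rw [if_neg (by
    show ¬ q.2 + 2 ^ (q.1 - 1) ≤ 2 ^ (q.1 + 1 - 2)
    rw [show q.1 + 1 - 2 = q.1 - 1 by omega]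
    intro h
    linarith)]
  show sq2⁻¹ • cc (q.1 + 1 - 1, q.2 + 2 ^ (q.1 - 1) - 2 ^ (q.1 + 1 - 2)) = sq2⁻¹ • cc q
  rw [show q.1 + 1 - 1 = q.1 by omega, show q.1 + 1 - 2 = q.1 - 1 by omega,
    add_sub_cancel_right]

lemma reasm_int (T : X →L[ℝ] Y) (m : ℕ) (x₀ : X) (bb cc : ℕ × ℤ → X) (w : Y) :
    (∫ t in Set.Ico (0 : ℝ) 1, ‖w + Hsum (Dtree 1 (m + 1)) (fun q => T (reasm x₀ bb cc q)) t‖ ^ 2)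
      = (1 / 2) * (∫ t in Set.Ico (0 : ℝ) 1,
            ‖(w + T x₀) + Hsum (Dtree 1 m) (fun q => T (bb q)) t‖ ^ 2)
        + (1 / 2) * (∫ t in Set.Ico (0 : ℝ) 1,
            ‖(w - T x₀) + Hsum (Dtree 1 m) (fun q => T (cc q)) t‖ ^ 2) := by
  have hins : ∀ t : ℝ, Hsum (Dtree 1 (m + 1)) (fun q => T (reasm x₀ bb cc q)) t
      = haar 1 1 t • T x₀ + Hsum (Dtree 2 (m + 1)) (fun q => T (reasm x₀ bb cc q)) t := by
    intro t
    rw [Dtree_root m, Hsum_insert (root_not_mem_Dtree2 (m + 1))]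
    rw [show T (reasm x₀ bb cc (1, 1)) = T x₀ from by rw [reasm_root]]
  have hbL : ∀ s : ℝ, Hsum (Dtree 1 m) (yL (fun q => T (reasm x₀ bb cc q))) s
      = Hsum (Dtree 1 m) (fun q => T (bb q)) s := by
    intro s
    refine Finset.sum_congr rfl fun q hq => ?_
    obtain ⟨hq1, _, hq3, hq4⟩ := mem_Dtree.mp hq
    have : yL (fun q => T (reasm x₀ bb cc q)) q = T (bb q) := by
      show sq2 • T (reasm x₀ bb cc (q.1 + 1, q.2)) = T (bb q)
      rw [reasm_left hq1 hq4, T.map_smul, smul_smul, mul_inv_cancel₀ sq2_ne, one_smul]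
    rw [this]
  have hbR : ∀ s : ℝ, Hsum (Dtree 1 m) (yR (fun q => T (reasm x₀ bb cc q))) s
      = Hsum (Dtree 1 m) (fun q => T (cc q)) s := by
    intro s
    refine Finset.sum_congr rfl fun q hq => ?_
    obtain ⟨hq1, _, hq3, hq4⟩ := mem_Dtree.mp hq
    have : yR (fun q => T (reasm x₀ bb cc q)) q = T (cc q) := by
      show sq2 • T (reasm x₀ bb cc (q.1 + 1, q.2 + 2 ^ (q.1 - 1))) = T (cc q)
      rw [reasm_right hq1 hq3, T.map_smul, smul_smul, mul_inv_cancel₀ sq2_ne, one_smul]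
    rw [this]
  calc (∫ t in Set.Ico (0 : ℝ) 1, ‖w + Hsum (Dtree 1 (m + 1)) (fun q => T (reasm x₀ bb cc q)) t‖ ^ 2)
      = ∫ t in Set.Ico (0 : ℝ) 1,
          ‖w + (haar 1 1 t • T x₀ + Hsum (Dtree 2 (m + 1)) (fun q => T (reasm x₀ bb cc q)) t)‖ ^ 2 :=
        MeasureTheory.setIntegral_congr_fun measurableSet_Ico (fun t _ => by rw [hins t])
    _ = (1 / 2) * (∫ s in Set.Ico (0 : ℝ) 1,
            ‖(w + T x₀) + Hsum (FL (Dtree 2 (m + 1))) (yL (fun q => T (reasm x₀ bb cc q))) s‖ ^ 2)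
        + (1 / 2) * (∫ s in Set.Ico (0 : ℝ) 1,
            ‖(w - T x₀) + Hsum (FR (Dtree 2 (m + 1))) (yR (fun q => T (reasm x₀ bb cc q))) s‖ ^ 2) :=
        split (Dtree2_levels (m + 1)) _ _ w
    _ = (1 / 2) * (∫ t in Set.Ico (0 : ℝ) 1,
            ‖(w + T x₀) + Hsum (Dtree 1 m) (fun q => T (bb q)) t‖ ^ 2)
        + (1 / 2) * (∫ t in Set.Ico (0 : ℝ) 1,
            ‖(w - T x₀) + Hsum (Dtree 1 m) (fun q => T (cc q)) t‖ ^ 2) := by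
        simp only [FL_Dtree m, FR_Dtree m, hbL, hbR]

lemma reasm_sum (m : ℕ) (x₀ : X) (bb cc : ℕ × ℤ → X) :
    ∑ q ∈ Dtree 1 (m + 1), ‖reasm x₀ bb cc q‖ ^ 2
      = ‖x₀‖ ^ 2 + (1 / 2) * ∑ q ∈ Dtree 1 m, ‖bb q‖ ^ 2
          + (1 / 2) * ∑ q ∈ Dtree 1 m, ‖cc q‖ ^ 2 := by
  rw [Dtree_root m, Finset.sum_insert (root_not_mem_Dtree2 (m + 1)), reasm_root]
  rw [← Finset.sum_filter_add_sum_filter_not (Dtree 2 (m + 1)) (fun p => p.2 ≤ 2 ^ (p.1 - 2))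
      (fun p => ‖reasm x₀ bb cc p‖ ^ 2)]
  have hG2 := Dtree2_levels (m + 1)
  have hL : ∑ p ∈ (Dtree 2 (m + 1)).filter (fun p => p.2 ≤ 2 ^ (p.1 - 2)),
      ‖reasm x₀ bb cc p‖ ^ 2 = (1 / 2) * ∑ q ∈ Dtree 1 m, ‖bb q‖ ^ 2 := by
    rw [← FL_Dtree m]
    unfold FL
    rw [Finset.sum_image (FL_inj (fun p hp => (hG2 p hp).1)), Finset.mul_sum]
    refine Finset.sum_congr rfl fun p hp => ?_
    obtain ⟨hpD, hcond⟩ := Finset.mem_filter.mp hp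
    have hp2 := (hG2 p hpD).1
    have : reasm x₀ bb cc p = sq2⁻¹ • bb (p.1 - 1, p.2) := by
      unfold reasm
      rw [if_neg (by rw [Prod.mk.injEq]; intro ⟨h, _⟩; omega), if_pos hcond]
    rw [this, norm_sq2_inv_smul]
  have hR : ∑ p ∈ (Dtree 2 (m + 1)).filter (fun p => ¬ p.2 ≤ 2 ^ (p.1 - 2)),
      ‖reasm x₀ bb cc p‖ ^ 2 = (1 / 2) * ∑ q ∈ Dtree 1 m, ‖cc q‖ ^ 2 := by
    rw [← FR_Dtree m]
    unfold FR
    rw [Finset.sum_image (FR_inj (fun p hp => (hG2 p hp).1)), Finset.mul_sum]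
    refine Finset.sum_congr rfl fun p hp => ?_
    obtain ⟨hpD, hcond⟩ := Finset.mem_filter.mp hp
    have hp2 := (hG2 p hpD).1
    have : reasm x₀ bb cc p = sq2⁻¹ • cc (p.1 - 1, p.2 - 2 ^ (p.1 - 2)) := by
      unfold reasm
      rw [if_neg (by rw [Prod.mk.injEq]; intro ⟨h, _⟩; omega), if_neg hcond]
    rw [this, norm_sq2_inv_smul]
  rw [hL, hR]
  ring

lemma SC_empty (T : X →L[ℝ] Y) (m : ℕ) (x : ℕ × ℤ → X) :
    ∃ (ι : Type) (s : Finset ι) (α : ι → ℝ) (b : ι → ℕ × ℤ → X),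
      (∀ i ∈ s, 0 ≤ α i) ∧ (∑ i ∈ s, α i = 1) ∧
      (∑ i ∈ s, α i * ∑ q ∈ Dtree 1 m, ‖b i q‖ ^ 2 ≤ ∑ p ∈ (∅ : Finset (ℕ × ℤ)), ‖x p‖ ^ 2) ∧
      ∀ w : Y, (∫ t in Set.Ico (0 : ℝ) 1, ‖w + Hsum (∅ : Finset (ℕ × ℤ)) (fun p => T (x p)) t‖ ^ 2)
          ≤ ∑ i ∈ s, α i * ∫ t in Set.Ico (0 : ℝ) 1,
              ‖w + Hsum (Dtree 1 m) (fun q => T (b i q)) t‖ ^ 2 := by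
  refine ⟨Unit, {Unit.unit}, fun _ => 1, fun _ _ => 0, by simp, by simp, by simp, fun w => ?_⟩
  have h1 : Hsum (∅ : Finset (ℕ × ℤ)) (fun p => T (x p)) = fun _ => 0 := by
    funext t; exact Finset.sum_empty
  have h2 : Hsum (Dtree 1 m) (fun _ => T (0:X)) = fun _ => 0 := by
    funext t
    exact Finset.sum_eq_zero fun p _ => by rw [map_zero, smul_zero]
  refine le_of_eq ?_
  simp only [Finset.sum_singleton, one_mul, h1, h2]

theorem SC (T : X →L[ℝ] Y) :
    ∀ (N m : ℕ) (F : Finset (ℕ × ℤ)), (∀ p ∈ F, memD p) → (∀ p ∈ F, p.1 ≤ N) → lh F ≤ m →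
    ∀ x : ℕ × ℤ → X,
    ∃ (ι : Type) (s : Finset ι) (α : ι → ℝ) (b : ι → ℕ × ℤ → X),
      (∀ i ∈ s, 0 ≤ α i) ∧ (∑ i ∈ s, α i = 1) ∧
      (∑ i ∈ s, α i * ∑ q ∈ Dtree 1 m, ‖b i q‖ ^ 2 ≤ ∑ p ∈ F, ‖x p‖ ^ 2) ∧
      ∀ w : Y, (∫ t in Set.Ico (0 : ℝ) 1, ‖w + Hsum F (fun p => T (x p)) t‖ ^ 2)
          ≤ ∑ i ∈ s, α i * ∫ t in Set.Ico (0 : ℝ) 1,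
              ‖w + Hsum (Dtree 1 m) (fun q => T (b i q)) t‖ ^ 2 := by
  intro N
  induction N with
  | zero =>
    intro m F hmemD hlev hlh x
    have hF : F = ∅ := Finset.eq_empty_of_forall_notMem fun p hp => by
      have h1 := (hmemD p hp).1
      have h2 := hlev p hp
      omega
    subst hF
    exact SC_empty T m x
  | succ N ih =>
    intro m F hmemD hlev hlh x
    by_cases hFe : F = ∅
    · subst hFe; exact SC_empty T m x
    have hyLfun : yL (fun p => T (x p)) = fun q => T (yL x q) := by
      funext q; simp only [yL, T.map_smul]
    have hyRfun : yR (fun p => T (x p)) = fun q => T (yR x q) := by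
      funext q; simp only [yR, T.map_smul]
    by_cases hroot : ((1 : ℕ), (1 : ℤ)) ∈ F
    · -- Case A : the root is present
      obtain ⟨m', rfl⟩ : ∃ m', m = m' + 1 := by
        have h0mem : (0:ℝ) ∈ Set.Ico (0:ℝ) 1 := by norm_num [Set.mem_Ico]
        have h1 : 1 ≤ branchCount F 0 := by
          refine Finset.card_pos.mpr ⟨(1, 1), Finset.mem_filter.mpr ⟨hroot, ?_⟩⟩
          show (0:ℝ) ∈ dyadic ((1:ℕ) - 1) 1
          simp only [dyadic, Set.mem_Ico]
          norm_num
        have h2 : 1 ≤ lh F := le_trans h1 (branchCount_le_lh h0mem)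
        have h3 := le_trans h2 hlh
        exact ⟨m - 1, by omega⟩
      set G := F.erase (1, 1) with hGdef
      have hFeq : F = insert (1, 1) G := (Finset.insert_erase hroot).symm
      have hG : ∀ p ∈ G, 2 ≤ p.1 ∧ memD p := by
        intro p hp
        have hpF := Finset.mem_of_mem_erase hp
        have hne := Finset.ne_of_mem_erase hp
        have hD := hmemD p hpF
        refine ⟨?_, hD⟩
        rcases Nat.lt_or_ge p.1 2 with h | h
        · exfalso
          have h1 : p.1 = 1 := by have := hD.1; omega
          have h4 : p.2 ≤ 2 ^ (p.1 - 1) := hD.2.2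
          rw [h1] at h4
          norm_num at h4
          have h5 := hD.2.1
          exact hne (Prod.ext h1 (by omega))
        · exact h
      have hGlev : ∀ p ∈ G, p.1 ≤ N + 1 := fun p hp => hlev p (Finset.mem_of_mem_erase hp)
      have hlhL : lh (FL G) ≤ m' := by
        refine lh_le fun s hs => ?_
        obtain ⟨hs0, hs1⟩ := hs
        have hhalf : s / 2 ∈ Set.Ico (0:ℝ) 1 := ⟨by linarith, by linarith⟩
        have e1 := branchCount_FL hG hs1
        have e2 := branchCount_root hroot hhalf
        have e3 := le_trans (branchCount_le_lh (F := F) hhalf) hlh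
        rw [← hGdef] at e2
        omega
      have hlhR : lh (FR G) ≤ m' := by
        refine lh_le fun s hs => ?_
        obtain ⟨hs0, hs1⟩ := hs
        have hhalf : (s + 1) / 2 ∈ Set.Ico (0:ℝ) 1 := ⟨by linarith, by linarith⟩
        have e1 := branchCount_FR hG hs0
        have e2 := branchCount_root hroot hhalf
        have e3 := le_trans (branchCount_le_lh (F := F) hhalf) hlh
        rw [← hGdef] at e2
        omega
      obtain ⟨ι₁, s₁, α, bb, hα0, hα1, hαs, hαi⟩ :=
        ih m' (FL G) (FL_memD hG) (FL_level hGlev) hlhL (yL x)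
      obtain ⟨ι₂, s₂, β, cc, hβ0, hβ1, hβs, hβi⟩ :=
        ih m' (FR G) (FR_memD hG) (FR_level hGlev) hlhR (yR x)
      refine ⟨ι₁ × ι₂, s₁ ×ˢ s₂, fun ij => α ij.1 * β ij.2,
        fun ij => reasm (x (1, 1)) (bb ij.1) (cc ij.2), ?_, ?_, ?_, ?_⟩
      · rintro ⟨i, j⟩ hij
        obtain ⟨hi, hj⟩ := Finset.mem_product.mp hij
        exact mul_nonneg (hα0 i hi) (hβ0 j hj)
      · rw [Finset.sum_product]
        calc ∑ i ∈ s₁, ∑ j ∈ s₂, α i * β j = ∑ i ∈ s₁, α i * ∑ j ∈ s₂, β j :=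
              Finset.sum_congr rfl fun i _ => (Finset.mul_sum _ _ _).symm
          _ = 1 := by rw [hβ1]; simpa using hα1
      · -- coefficient bound
        calc ∑ ij ∈ s₁ ×ˢ s₂, (α ij.1 * β ij.2)
                * ∑ q ∈ Dtree 1 (m' + 1), ‖reasm (x (1,1)) (bb ij.1) (cc ij.2) q‖ ^ 2
            = ∑ ij ∈ s₁ ×ˢ s₂, (α ij.1 * β ij.2) * (‖x (1,1)‖ ^ 2
                + (1/2) * (∑ q ∈ Dtree 1 m', ‖bb ij.1 q‖ ^ 2)
                + (1/2) * (∑ q ∈ Dtree 1 m', ‖cc ij.2 q‖ ^ 2)) :=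
              Finset.sum_congr rfl fun ij _ => by
                rw [reasm_sum m' (x (1,1)) (bb ij.1) (cc ij.2)]
          _ = ‖x (1,1)‖ ^ 2 + (1/2) * (∑ i ∈ s₁, α i * ∑ q ∈ Dtree 1 m', ‖bb i q‖ ^ 2)
                + (1/2) * (∑ j ∈ s₂, β j * ∑ q ∈ Dtree 1 m', ‖cc j q‖ ^ 2) :=
              mix s₁ s₂ α β (fun i => ∑ q ∈ Dtree 1 m', ‖bb i q‖ ^ 2)
                (fun j => ∑ q ∈ Dtree 1 m', ‖cc j q‖ ^ 2) (‖x (1,1)‖ ^ 2) hα1 hβ1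
          _ ≤ ∑ p ∈ F, ‖x p‖ ^ 2 := ?_
        have h1 : (∑ i ∈ s₁, α i * ∑ q ∈ Dtree 1 m', ‖bb i q‖ ^ 2)
            ≤ 2 * ∑ p ∈ G.filter (fun p => p.2 ≤ 2 ^ (p.1 - 2)), ‖x p‖ ^ 2 := by
          rw [← sum_sq_FL hG x]; exact hαs
        have h2 : (∑ j ∈ s₂, β j * ∑ q ∈ Dtree 1 m', ‖cc j q‖ ^ 2)
            ≤ 2 * ∑ p ∈ G.filter (fun p => ¬ p.2 ≤ 2 ^ (p.1 - 2)), ‖x p‖ ^ 2 := by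
          rw [← sum_sq_FR hG x]; exact hβs
        have h3 := Finset.sum_filter_add_sum_filter_not G (fun p => p.2 ≤ 2 ^ (p.1 - 2))
          (fun p => ‖x p‖ ^ 2)
        have h4 : ∑ p ∈ F, ‖x p‖ ^ 2 = ‖x (1,1)‖ ^ 2 + ∑ p ∈ G, ‖x p‖ ^ 2 := by
          rw [hFeq, Finset.sum_insert (Finset.notMem_erase _ _)]
        linarith
      · -- the integral inequality
        intro w
        have hw1 : ∀ t : ℝ, Hsum F (fun p => T (x p)) t
            = haar 1 1 t • T (x (1,1)) + Hsum G (fun p => T (x p)) t := by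
          intro t
          rw [hFeq, Hsum_insert (Finset.notMem_erase _ _)]
        calc (∫ t in Set.Ico (0 : ℝ) 1, ‖w + Hsum F (fun p => T (x p)) t‖ ^ 2)
            = ∫ t in Set.Ico (0 : ℝ) 1,
                ‖w + (haar 1 1 t • T (x (1,1)) + Hsum G (fun p => T (x p)) t)‖ ^ 2 :=
              MeasureTheory.setIntegral_congr_fun measurableSet_Ico (fun t _ => by rw [hw1 t])
          _ = (1 / 2) * (∫ s in Set.Ico (0 : ℝ) 1,
                ‖(w + T (x (1,1))) + Hsum (FL G) (fun q => T (yL x q)) s‖ ^ 2)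
              + (1 / 2) * (∫ s in Set.Ico (0 : ℝ) 1,
                ‖(w - T (x (1,1))) + Hsum (FR G) (fun q => T (yR x q)) s‖ ^ 2) := by
              rw [split hG (fun p => T (x p)) (T (x (1,1))) w, hyLfun, hyRfun]
          _ ≤ (1 / 2) * (∑ i ∈ s₁, α i * ∫ t in Set.Ico (0 : ℝ) 1,
                ‖(w + T (x (1,1))) + Hsum (Dtree 1 m') (fun q => T (bb i q)) t‖ ^ 2)
              + (1 / 2) * (∑ j ∈ s₂, β j * ∫ t in Set.Ico (0 : ℝ) 1,
                ‖(w - T (x (1,1))) + Hsum (Dtree 1 m') (fun q => T (cc j q)) t‖ ^ 2) :=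
              add_le_add (mul_le_mul_of_nonneg_left (hαi (w + T (x (1,1)))) (by norm_num))
                (mul_le_mul_of_nonneg_left (hβi (w - T (x (1,1)))) (by norm_num))
          _ = 0 + (1 / 2) * (∑ i ∈ s₁, α i * ∫ t in Set.Ico (0 : ℝ) 1,
                ‖(w + T (x (1,1))) + Hsum (Dtree 1 m') (fun q => T (bb i q)) t‖ ^ 2)
              + (1 / 2) * (∑ j ∈ s₂, β j * ∫ t in Set.Ico (0 : ℝ) 1,
                ‖(w - T (x (1,1))) + Hsum (Dtree 1 m') (fun q => T (cc j q)) t‖ ^ 2) := by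
              rw [zero_add]
          _ = ∑ ij ∈ s₁ ×ˢ s₂, (α ij.1 * β ij.2) * (0
              + (1 / 2) * (∫ t in Set.Ico (0 : ℝ) 1,
                ‖(w + T (x (1,1))) + Hsum (Dtree 1 m') (fun q => T (bb ij.1 q)) t‖ ^ 2)
              + (1 / 2) * (∫ t in Set.Ico (0 : ℝ) 1,
                ‖(w - T (x (1,1))) + Hsum (Dtree 1 m') (fun q => T (cc ij.2 q)) t‖ ^ 2)) :=
              (mix s₁ s₂ α β
                (fun i => ∫ t in Set.Ico (0 : ℝ) 1,
                  ‖(w + T (x (1,1))) + Hsum (Dtree 1 m') (fun q => T (bb i q)) t‖ ^ 2)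
                (fun j => ∫ t in Set.Ico (0 : ℝ) 1,
                  ‖(w - T (x (1,1))) + Hsum (Dtree 1 m') (fun q => T (cc j q)) t‖ ^ 2)
                0 hα1 hβ1).symm
          _ = ∑ ij ∈ s₁ ×ˢ s₂, (α ij.1 * β ij.2) * ∫ t in Set.Ico (0 : ℝ) 1,
                ‖w + Hsum (Dtree 1 (m' + 1))
                  (fun q => T (reasm (x (1,1)) (bb ij.1) (cc ij.2) q)) t‖ ^ 2 :=
              Finset.sum_congr rfl fun ij _ => by
                rw [reasm_int T m' (x (1,1)) (bb ij.1) (cc ij.2) w, zero_add]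
    · -- Case B : the root is absent
      have hG : ∀ p ∈ F, 2 ≤ p.1 ∧ memD p := by
        intro p hp
        have hD := hmemD p hp
        refine ⟨?_, hD⟩
        rcases Nat.lt_or_ge p.1 2 with h | h
        · exfalso
          have h1 : p.1 = 1 := by have := hD.1; omega
          have h4 : p.2 ≤ 2 ^ (p.1 - 1) := hD.2.2
          rw [h1] at h4
          norm_num at h4
          have h5 := hD.2.1
          have : p = ((1:ℕ), (1:ℤ)) := Prod.ext h1 (by omega)
          rw [this] at hp
          exact hroot hp
        · exact h
      have hlhL : lh (FL F) ≤ m := by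
        refine lh_le fun s hs => ?_
        obtain ⟨hs0, hs1⟩ := hs
        have hhalf : s / 2 ∈ Set.Ico (0:ℝ) 1 := ⟨by linarith, by linarith⟩
        have e1 := branchCount_FL hG hs1
        have e3 := le_trans (branchCount_le_lh (F := F) hhalf) hlh
        omega
      have hlhR : lh (FR F) ≤ m := by
        refine lh_le fun s hs => ?_
        obtain ⟨hs0, hs1⟩ := hs
        have hhalf : (s + 1) / 2 ∈ Set.Ico (0:ℝ) 1 := ⟨by linarith, by linarith⟩
        have e1 := branchCount_FR hG hs0
        have e3 := le_trans (branchCount_le_lh (F := F) hhalf) hlh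
        omega
      obtain ⟨ι₁, s₁, α, bb, hα0, hα1, hαs, hαi⟩ :=
        ih m (FL F) (FL_memD hG) (FL_level hlev) hlhL (yL x)
      obtain ⟨ι₂, s₂, β, cc, hβ0, hβ1, hβs, hβi⟩ :=
        ih m (FR F) (FR_memD hG) (FR_level hlev) hlhR (yR x)
      refine ⟨ι₁ ⊕ ι₂, s₁.disjSum s₂,
        Sum.elim (fun i => (1/2) * α i) (fun j => (1/2) * β j), Sum.elim bb cc, ?_, ?_, ?_, ?_⟩
      · intro i hi
        rcases i with i | j
        · simp only [Sum.elim_inl]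
          exact mul_nonneg (by norm_num) (hα0 i (Finset.inl_mem_disjSum.mp hi))
        · simp only [Sum.elim_inr]
          exact mul_nonneg (by norm_num) (hβ0 j (Finset.inr_mem_disjSum.mp hi))
      · rw [Finset.sum_disjSum]
        simp only [Sum.elim_inl, Sum.elim_inr]
        rw [← Finset.mul_sum, ← Finset.mul_sum, hα1, hβ1]
        norm_num
      · rw [Finset.sum_disjSum]
        simp only [Sum.elim_inl, Sum.elim_inr]
        have h1 : ∑ i ∈ s₁, 1 / 2 * α i * ∑ q ∈ Dtree 1 m, ‖bb i q‖ ^ 2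
            = (1/2) * ∑ i ∈ s₁, α i * ∑ q ∈ Dtree 1 m, ‖bb i q‖ ^ 2 := by
          rw [Finset.mul_sum]
          exact Finset.sum_congr rfl fun i _ => by ring
        have h2 : ∑ j ∈ s₂, 1 / 2 * β j * ∑ q ∈ Dtree 1 m, ‖cc j q‖ ^ 2
            = (1/2) * ∑ j ∈ s₂, β j * ∑ q ∈ Dtree 1 m, ‖cc j q‖ ^ 2 := by
          rw [Finset.mul_sum]
          exact Finset.sum_congr rfl fun j _ => by ring
        rw [h1, h2]
        have h3 : (∑ i ∈ s₁, α i * ∑ q ∈ Dtree 1 m, ‖bb i q‖ ^ 2)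
            ≤ 2 * ∑ p ∈ F.filter (fun p => p.2 ≤ 2 ^ (p.1 - 2)), ‖x p‖ ^ 2 := by
          rw [← sum_sq_FL hG x]; exact hαs
        have h4 : (∑ j ∈ s₂, β j * ∑ q ∈ Dtree 1 m, ‖cc j q‖ ^ 2)
            ≤ 2 * ∑ p ∈ F.filter (fun p => ¬ p.2 ≤ 2 ^ (p.1 - 2)), ‖x p‖ ^ 2 := by
          rw [← sum_sq_FR hG x]; exact hβs
        have h5 := Finset.sum_filter_add_sum_filter_not F (fun p => p.2 ≤ 2 ^ (p.1 - 2))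
          (fun p => ‖x p‖ ^ 2)
        linarith
      · intro w
        calc (∫ t in Set.Ico (0 : ℝ) 1, ‖w + Hsum F (fun p => T (x p)) t‖ ^ 2)
            = ∫ t in Set.Ico (0 : ℝ) 1,
                ‖w + (haar 1 1 t • (0:Y) + Hsum F (fun p => T (x p)) t)‖ ^ 2 :=
              MeasureTheory.setIntegral_congr_fun measurableSet_Ico
                (fun t _ => by rw [smul_zero, zero_add])
          _ = (1 / 2) * (∫ s in Set.Ico (0 : ℝ) 1,
                ‖(w + 0) + Hsum (FL F) (fun q => T (yL x q)) s‖ ^ 2)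
              + (1 / 2) * (∫ s in Set.Ico (0 : ℝ) 1,
                ‖(w - 0) + Hsum (FR F) (fun q => T (yR x q)) s‖ ^ 2) := by
              rw [split hG (fun p => T (x p)) (0:Y) w, hyLfun, hyRfun]
          _ = (1 / 2) * (∫ s in Set.Ico (0 : ℝ) 1,
                ‖w + Hsum (FL F) (fun q => T (yL x q)) s‖ ^ 2)
              + (1 / 2) * (∫ s in Set.Ico (0 : ℝ) 1,
                ‖w + Hsum (FR F) (fun q => T (yR x q)) s‖ ^ 2) := by
              simp only [add_zero, sub_zero]
          _ ≤ (1 / 2) * (∑ i ∈ s₁, α i * ∫ t in Set.Ico (0 : ℝ) 1,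
                ‖w + Hsum (Dtree 1 m) (fun q => T (bb i q)) t‖ ^ 2)
              + (1 / 2) * (∑ j ∈ s₂, β j * ∫ t in Set.Ico (0 : ℝ) 1,
                ‖w + Hsum (Dtree 1 m) (fun q => T (cc j q)) t‖ ^ 2) :=
              add_le_add (mul_le_mul_of_nonneg_left (hαi w) (by norm_num))
                (mul_le_mul_of_nonneg_left (hβi w) (by norm_num))
          _ = ∑ i ∈ s₁.disjSum s₂, Sum.elim (fun i => (1/2) * α i) (fun j => (1/2) * β j) i
                * ∫ t in Set.Ico (0 : ℝ) 1,
                  ‖w + Hsum (Dtree 1 m) (fun q => T (Sum.elim bb cc i q)) t‖ ^ 2 := by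
              rw [Finset.sum_disjSum]
              simp only [Sum.elim_inl, Sum.elim_inr]
              rw [Finset.mul_sum, Finset.mul_sum]
              congr 1
              · exact Finset.sum_congr rfl fun i _ => by ring
              · exact Finset.sum_congr rfl fun j _ => by ring

lemma crude (T : X →L[ℝ] Y) (F' : Finset (ℕ × ℤ)) :
    ∃ c : ℝ, 0 ≤ c ∧ ∀ x : ℕ × ℤ → X,
      Real.sqrt (∫ t in Set.Ico (0 : ℝ) 1, ‖∑ kj ∈ F', haar kj.1 kj.2 t • T (x kj)‖ ^ 2)
        ≤ c * Real.sqrt (∑ kj ∈ F', ‖x kj‖ ^ 2) := by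
  set N := F'.sup (fun p => p.1) with hN
  set K := ∑ p ∈ F', ((2:ℝ) ^ (((p.1:ℝ) - 1) / 2) * ‖T‖) ^ 2 with hK
  have hK0 : 0 ≤ K := Finset.sum_nonneg fun p _ => sq_nonneg _
  refine ⟨Real.sqrt K, Real.sqrt_nonneg K, fun x => ?_⟩
  set S := ∑ kj ∈ F', ‖x kj‖ ^ 2 with hSdef
  have hS0 : 0 ≤ S := Finset.sum_nonneg fun p _ => sq_nonneg _
  have hlev : ∀ p ∈ F', p.1 ≤ N := fun p hp => Finset.le_sup (f := fun p : ℕ × ℤ => p.1) hp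
  have hdisc : (∫ t in Set.Ico (0 : ℝ) 1, ‖∑ kj ∈ F', haar kj.1 kj.2 t • T (x kj)‖ ^ 2)
      = ((2:ℝ)^N)⁻¹ * ∑ r ∈ Finset.range (2^N),
          ‖∑ kj ∈ F', haar kj.1 kj.2 ((r:ℝ)/2^N) • T (x kj)‖ ^ 2 := by
    refine disc_integral N fun r hr t ht => ?_
    show ‖∑ kj ∈ F', haar kj.1 kj.2 t • T (x kj)‖ ^ 2 = _
    rw [show (∑ kj ∈ F', haar kj.1 kj.2 t • T (x kj))
      = Hsum F' (fun p => T (x p)) t from rfl, Hsum_cell hlev _ ht]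
    rfl
  have hpt : ∀ t : ℝ, ‖∑ kj ∈ F', haar kj.1 kj.2 t • T (x kj)‖ ^ 2 ≤ K * S := by
    intro t
    have h1 : ‖∑ kj ∈ F', haar kj.1 kj.2 t • T (x kj)‖
        ≤ ∑ kj ∈ F', ((2:ℝ) ^ (((kj.1:ℝ) - 1) / 2) * ‖T‖) * ‖x kj‖ := by
      refine le_trans (norm_sum_le _ _) (Finset.sum_le_sum fun p hp => ?_)
      rw [norm_smul, Real.norm_eq_abs, mul_assoc]
      exact mul_le_mul (abs_haar_le p.1 p.2 t) (T.le_opNorm (x p)) (norm_nonneg _)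
        (Real.rpow_pos_of_pos two_pos _).le
    have h2 := Finset.sum_mul_sq_le_sq_mul_sq F'
      (fun kj => (2:ℝ) ^ (((kj.1:ℝ) - 1) / 2) * ‖T‖) (fun kj => ‖x kj‖)
    calc ‖∑ kj ∈ F', haar kj.1 kj.2 t • T (x kj)‖ ^ 2
        ≤ (∑ kj ∈ F', ((2:ℝ) ^ (((kj.1:ℝ) - 1) / 2) * ‖T‖) * ‖x kj‖) ^ 2 :=
          pow_le_pow_left₀ (norm_nonneg _) h1 2
      _ ≤ K * S := h2
  have hsum : (∑ r ∈ Finset.range (2^N),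
      ‖∑ kj ∈ F', haar kj.1 kj.2 ((r:ℝ)/2^N) • T (x kj)‖ ^ 2) ≤ (2^N : ℕ) * (K * S) := by
    calc (∑ r ∈ Finset.range (2^N), ‖∑ kj ∈ F', haar kj.1 kj.2 ((r:ℝ)/2^N) • T (x kj)‖ ^ 2)
        ≤ ∑ _r ∈ Finset.range (2^N), K * S := Finset.sum_le_sum fun r _ => hpt _
      _ = (2^N : ℕ) * (K * S) := by rw [Finset.sum_const, Finset.card_range, nsmul_eq_mul]
  have hint : (∫ t in Set.Ico (0 : ℝ) 1, ‖∑ kj ∈ F', haar kj.1 kj.2 t • T (x kj)‖ ^ 2)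
      ≤ K * S := by
    rw [hdisc]
    have hP : (0:ℝ) < 2^N := by positivity
    calc ((2:ℝ)^N)⁻¹ * ∑ r ∈ Finset.range (2^N),
          ‖∑ kj ∈ F', haar kj.1 kj.2 ((r:ℝ)/2^N) • T (x kj)‖ ^ 2
        ≤ ((2:ℝ)^N)⁻¹ * ((2^N : ℕ) * (K * S)) :=
          mul_le_mul_of_nonneg_left hsum (by positivity)
      _ = K * S := by push_cast; field_simp
  calc Real.sqrt (∫ t in Set.Ico (0 : ℝ) 1, ‖∑ kj ∈ F', haar kj.1 kj.2 t • T (x kj)‖ ^ 2)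
      ≤ Real.sqrt (K * S) := Real.sqrt_le_sqrt hint
    _ = Real.sqrt K * Real.sqrt S := Real.sqrt_mul hK0 S

lemma tau_spec (T : X →L[ℝ] Y) (F' : Finset (ℕ × ℤ)) :
    0 ≤ tau T F' ∧ ∀ x : ℕ × ℤ → X,
      Real.sqrt (∫ t in Set.Ico (0 : ℝ) 1, ‖∑ kj ∈ F', haar kj.1 kj.2 t • T (x kj)‖ ^ 2)
        ≤ tau T F' * Real.sqrt (∑ kj ∈ F', ‖x kj‖ ^ 2) := by
  set SS := {c : ℝ | 0 ≤ c ∧ ∀ x : ℕ × ℤ → X,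
    Real.sqrt (∫ t in Set.Ico (0 : ℝ) 1, ‖∑ kj ∈ F', haar kj.1 kj.2 t • T (x kj)‖ ^ 2)
      ≤ c * Real.sqrt (∑ kj ∈ F', ‖x kj‖ ^ 2)} with hSS
  have htau : tau T F' = sInf SS := rfl
  have hne : SS.Nonempty := by
    obtain ⟨c, hc1, hc2⟩ := crude T F'
    exact ⟨c, hc1, hc2⟩
  have h0 : 0 ≤ sInf SS := le_csInf hne fun c hc => hc.1
  rw [htau]
  refine ⟨h0, fun x => ?_⟩
  by_cases hzero : (∑ kj ∈ F', ‖x kj‖ ^ 2) = 0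
  · have hx : ∀ p ∈ F', x p = 0 := by
      intro p hp
      have hle : ‖x p‖ ^ 2 ≤ 0 := by
        rw [← hzero]
        exact Finset.single_le_sum (f := fun p => ‖x p‖ ^ 2) (fun q _ => sq_nonneg _) hp
      have h1 : ‖x p‖ = 0 := by nlinarith [norm_nonneg (x p)]
      exact norm_eq_zero.mp h1
    have hzero2 : ∀ t : ℝ, (∑ kj ∈ F', haar kj.1 kj.2 t • T (x kj)) = (0:Y) := fun t =>
      Finset.sum_eq_zero fun p hp => by rw [hx p hp, map_zero, smul_zero]
    have hzint : (∫ t in Set.Ico (0 : ℝ) 1, ‖∑ kj ∈ F', haar kj.1 kj.2 t • T (x kj)‖ ^ 2)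
        = 0 := by
      rw [MeasureTheory.setIntegral_congr_fun measurableSet_Ico
        (g := fun _ => (0:ℝ)) (fun t _ => by rw [hzero2 t, norm_zero]; norm_num)]
      simp
    rw [hzint, hzero, Real.sqrt_zero]
    simp
  · have hpos : 0 < Real.sqrt (∑ kj ∈ F', ‖x kj‖ ^ 2) :=
      Real.sqrt_pos.mpr (lt_of_le_of_ne (Finset.sum_nonneg fun p _ => sq_nonneg _)
        (Ne.symm hzero))
    have hlb : Real.sqrt (∫ t in Set.Ico (0 : ℝ) 1,
          ‖∑ kj ∈ F', haar kj.1 kj.2 t • T (x kj)‖ ^ 2)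
        / Real.sqrt (∑ kj ∈ F', ‖x kj‖ ^ 2) ≤ sInf SS :=
      le_csInf hne fun c hc => (div_le_iff₀ hpos).mpr (hc.2 x)
    calc Real.sqrt (∫ t in Set.Ico (0 : ℝ) 1,
          ‖∑ kj ∈ F', haar kj.1 kj.2 t • T (x kj)‖ ^ 2)
        = (Real.sqrt (∫ t in Set.Ico (0 : ℝ) 1,
            ‖∑ kj ∈ F', haar kj.1 kj.2 t • T (x kj)‖ ^ 2)
          / Real.sqrt (∑ kj ∈ F', ‖x kj‖ ^ 2)) * Real.sqrt (∑ kj ∈ F', ‖x kj‖ ^ 2) := by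
          field_simp
      _ ≤ sInf SS * Real.sqrt (∑ kj ∈ F', ‖x kj‖ ^ 2) :=
          mul_le_mul_of_nonneg_right hlb hpos.le

theorem tau_le_aux (T : X →L[ℝ] Y) (F : Finset (ℕ × ℤ))
    (hF : ∀ kj ∈ F, memD kj) (n : ℕ) (hlh : lh F = n) :
    tau T F ≤ tau T (Dtree 1 n) := by
  obtain ⟨hc0, hc⟩ := tau_spec T (Dtree 1 n)
  refine csInf_le ⟨0, fun d hd => hd.1⟩ ?_
  refine ⟨hc0, fun x => ?_⟩
  obtain ⟨ι, s, α, b, hα0, hα1, hαs, hαi⟩ := SC T (F.sup (fun p => p.1)) n F hF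
    (fun p hp => Finset.le_sup (f := fun p : ℕ × ℤ => p.1) hp) (le_of_eq hlh) x
  set c := tau T (Dtree 1 n) with hcdef
  have e0 : ∀ (Fz : Finset (ℕ × ℤ)) (y : ℕ × ℤ → X),
      (∫ t in Set.Ico (0:ℝ) 1, ‖(0:Y) + Hsum Fz (fun p => T (y p)) t‖ ^ 2)
        = ∫ t in Set.Ico (0:ℝ) 1, ‖∑ kj ∈ Fz, haar kj.1 kj.2 t • T (y kj)‖ ^ 2 := by
    intro Fz y
    exact MeasureTheory.setIntegral_congr_fun measurableSet_Ico fun t _ => by rw [zero_add]; rfl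
  have hSnn : (0:ℝ) ≤ ∑ p ∈ F, ‖x p‖ ^ 2 := Finset.sum_nonneg fun p _ => sq_nonneg _
  have hper : ∀ i ∈ s, (∫ t in Set.Ico (0:ℝ) 1,
      ‖(0:Y) + Hsum (Dtree 1 n) (fun q => T (b i q)) t‖ ^ 2)
        ≤ c ^ 2 * ∑ q ∈ Dtree 1 n, ‖b i q‖ ^ 2 := by
    intro i _
    rw [e0 (Dtree 1 n) (b i)]
    have h1 := hc (b i)
    have hpos : (0:ℝ) ≤ ∫ t in Set.Ico (0:ℝ) 1,
        ‖∑ kj ∈ Dtree 1 n, haar kj.1 kj.2 t • T (b i kj)‖ ^ 2 :=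
      MeasureTheory.setIntegral_nonneg measurableSet_Ico fun t _ => sq_nonneg _
    have h2 : (0:ℝ) ≤ ∑ q ∈ Dtree 1 n, ‖b i q‖ ^ 2 :=
      Finset.sum_nonneg fun q _ => sq_nonneg _
    calc (∫ t in Set.Ico (0:ℝ) 1, ‖∑ kj ∈ Dtree 1 n, haar kj.1 kj.2 t • T (b i kj)‖ ^ 2)
        = (Real.sqrt (∫ t in Set.Ico (0:ℝ) 1,
            ‖∑ kj ∈ Dtree 1 n, haar kj.1 kj.2 t • T (b i kj)‖ ^ 2)) ^ 2 :=
          (Real.sq_sqrt hpos).symm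
      _ ≤ (c * Real.sqrt (∑ q ∈ Dtree 1 n, ‖b i q‖ ^ 2)) ^ 2 :=
          pow_le_pow_left₀ (Real.sqrt_nonneg _) h1 2
      _ = c ^ 2 * ∑ q ∈ Dtree 1 n, ‖b i q‖ ^ 2 := by
          rw [mul_pow, Real.sq_sqrt h2]
  have hmain : (∫ t in Set.Ico (0:ℝ) 1,
      ‖∑ kj ∈ F, haar kj.1 kj.2 t • T (x kj)‖ ^ 2) ≤ c ^ 2 * ∑ p ∈ F, ‖x p‖ ^ 2 := by
    calc (∫ t in Set.Ico (0:ℝ) 1, ‖∑ kj ∈ F, haar kj.1 kj.2 t • T (x kj)‖ ^ 2)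
        = ∫ t in Set.Ico (0:ℝ) 1, ‖(0:Y) + Hsum F (fun p => T (x p)) t‖ ^ 2 := (e0 F x).symm
      _ ≤ ∑ i ∈ s, α i * ∫ t in Set.Ico (0:ℝ) 1,
            ‖(0:Y) + Hsum (Dtree 1 n) (fun q => T (b i q)) t‖ ^ 2 := hαi 0
      _ ≤ ∑ i ∈ s, α i * (c ^ 2 * ∑ q ∈ Dtree 1 n, ‖b i q‖ ^ 2) :=
          Finset.sum_le_sum fun i hi =>
            mul_le_mul_of_nonneg_left (hper i hi) (hα0 i hi)
      _ = c ^ 2 * ∑ i ∈ s, α i * ∑ q ∈ Dtree 1 n, ‖b i q‖ ^ 2 := by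
          rw [Finset.mul_sum]
          exact Finset.sum_congr rfl fun i _ => by ring
      _ ≤ c ^ 2 * ∑ p ∈ F, ‖x p‖ ^ 2 :=
          mul_le_mul_of_nonneg_left hαs (sq_nonneg c)
  calc Real.sqrt (∫ t in Set.Ico (0:ℝ) 1, ‖∑ kj ∈ F, haar kj.1 kj.2 t • T (x kj)‖ ^ 2)
      ≤ Real.sqrt (c ^ 2 * ∑ p ∈ F, ‖x p‖ ^ 2) := Real.sqrt_le_sqrt hmain
    _ = c * Real.sqrt (∑ p ∈ F, ‖x p‖ ^ 2) := by
        rw [Real.sqrt_mul (sq_nonneg c), Real.sqrt_sq hc0]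

end TauAux

theorem tau_le_of_localHeight {X Y : Type*} [NormedAddCommGroup X] [NormedSpace ℝ X]
    [CompleteSpace X] [NormedAddCommGroup Y] [NormedSpace ℝ Y] [CompleteSpace Y]
    (T : X →L[ℝ] Y) (F : Finset (ℕ × ℤ)) (hF : ∀ kj ∈ F, memD kj)
    (n : ℕ) (hlh : lh F = n) :
    tau T F ≤ tau T (Dtree 1 n) :=
  tau_le_aux T F hF n hlh
end

section
/- Let n ≥ 1 and let 𝔽 ⊆ 𝔻₁ⁿ be an index set of local height at most l ≤ n with |𝔽| < 2^l − 1. Then there exists an index (k,j) ∈ 𝔻₁ⁿ \ 𝔽 such that the enlarged set 𝔽 ∪ {(k,j)} still has local height at most l. -/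
open MeasureTheory Real Set
open scoped Classical

-- AUX START

lemma mem_dyadic_iff {m : ℕ} {j : ℤ} {t : ℝ} :
    t ∈ dyadic m j ↔ ⌊t * 2 ^ m⌋ = j - 1 := by
  have h2 : (0:ℝ) < 2 ^ m := by positivity
  rw [dyadic, Set.mem_Ico, div_le_iff₀ h2, lt_div_iff₀ h2, Int.floor_eq_iff]
  push_cast
  constructor
  · rintro ⟨h1, h2⟩; exact ⟨by linarith, by linarith⟩
  · rintro ⟨h1, h2⟩; exact ⟨by linarith, by linarith⟩

lemma floor_div_pow (x : ℝ) (d : ℕ) : ⌊x / 2 ^ d⌋ = ⌊x⌋ / (2:ℤ) ^ d := by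
  have h2 : (0:ℤ) < 2 ^ d := by positivity
  have h2r : (0:ℝ) < 2 ^ d := by positivity
  set q : ℤ := ⌊x⌋ / (2:ℤ) ^ d with hq
  set r : ℤ := ⌊x⌋ % (2:ℤ) ^ d with hr
  have heq : (2:ℤ)^d * q + r = ⌊x⌋ := Int.mul_ediv_add_emod ⌊x⌋ (2^d)
  have hr0 : 0 ≤ r := Int.emod_nonneg _ (by positivity)
  have hr1 : r < 2 ^ d := Int.emod_lt_of_pos _ h2
  have hfl : (⌊x⌋ : ℝ) ≤ x := Int.floor_le x
  have hfu : x < ⌊x⌋ + 1 := Int.lt_floor_add_one x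
  have heqr : (2:ℝ)^d * (q:ℝ) + (r:ℝ) = (⌊x⌋:ℝ) := by exact_mod_cast congrArg (fun z : ℤ => (z:ℝ)) heq
  have hr0r : (0:ℝ) ≤ (r:ℝ) := by exact_mod_cast hr0
  have hr1r : (r:ℝ) + 1 ≤ (2:ℝ) ^ d := by exact_mod_cast hr1
  rw [Int.floor_eq_iff]
  constructor
  · rw [le_div_iff₀ h2r]
    linarith
  · rw [div_lt_iff₀ h2r]
    push_cast
    nlinarith

lemma floor_nest {t t' : ℝ} {K m : ℕ} (hm : m ≤ K)
    (h : ⌊t * 2 ^ K⌋ = ⌊t' * 2 ^ K⌋) : ⌊t * 2 ^ m⌋ = ⌊t' * 2 ^ m⌋ := by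
  have key : ∀ s : ℝ, s * 2 ^ m = (s * 2 ^ K) / 2 ^ (K - m) := by
    intro s
    rw [eq_div_iff (by positivity), mul_assoc, ← pow_add]
    congr 2
    omega
  rw [key t, key t', floor_div_pow, floor_div_pow, h]

lemma mem_dyadic_congr {t t' : ℝ} {K : ℕ} {J : ℤ}
    (ht : t ∈ dyadic K J) (ht' : t' ∈ dyadic K J) {m : ℕ} {j : ℤ} (hm : m ≤ K) :
    (t ∈ dyadic m j ↔ t' ∈ dyadic m j) := by
  rw [mem_dyadic_iff] at ht ht' ⊢
  rw [mem_dyadic_iff, floor_nest hm (ht.trans ht'.symm)]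

lemma mem_Dtree_s16 {n : ℕ} {kj : ℕ × ℤ} :
    kj ∈ Dtree 1 n ↔ 1 ≤ kj.1 ∧ kj.1 ≤ n ∧ 1 ≤ kj.2 ∧ kj.2 ≤ 2 ^ (kj.1 - 1) := by
  obtain ⟨k, j⟩ := kj
  simp only [Dtree, Finset.mem_biUnion, Finset.mem_image, Finset.mem_Icc, Prod.mk.injEq]
  constructor
  · rintro ⟨k', ⟨h1, h2⟩, j', ⟨h3, h4⟩, rfl, rfl⟩
    exact ⟨h1, h2, h3, h4⟩
  · rintro ⟨h1, h2, h3, h4⟩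
    exact ⟨k, ⟨h1, h2⟩, j, ⟨h3, h4⟩, rfl, rfl⟩

lemma lh_le_iff {F : Finset (ℕ × ℤ)} {l : ℕ} :
    lh F ≤ l ↔ ∀ t ∈ Set.Ico (0:ℝ) 1, branchCount F t ≤ l := by
  have hbdd : BddAbove {m | ∃ t ∈ Set.Ico (0:ℝ) 1, branchCount F t = m} := by
    refine ⟨F.card, ?_⟩
    rintro m ⟨s, -, rfl⟩
    exact Finset.card_filter_le F _
  have h0 : branchCount F 0 ∈ {m | ∃ t ∈ Set.Ico (0:ℝ) 1, branchCount F t = m} :=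
    ⟨0, by constructor <;> norm_num, rfl⟩
  unfold lh
  constructor
  · intro h t ht
    exact le_trans (le_csSup hbdd ⟨t, ht, rfl⟩) h
  · intro h
    refine csSup_le ⟨_, h0⟩ ?_
    rintro m ⟨t, ht, rfl⟩
    exact h t ht

lemma branch_eq {t : ℝ} {w u : ℕ × ℤ} (hw : t ∈ dyadic (w.1 - 1) w.2)
    (hu : t ∈ dyadic (u.1 - 1) u.2) (h : w.1 = u.1) : w = u := by
  rw [mem_dyadic_iff] at hw hu
  refine Prod.ext h ?_
  rw [h] at hw
  omega

lemma prefix_filter_eq (F : Finset (ℕ × ℤ)) {t t' : ℝ} {K : ℕ} {J : ℤ}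
    (ht : t ∈ dyadic (K - 1) J) (ht' : t' ∈ dyadic (K - 1) J) :
    F.filter (fun w => t ∈ dyadic (w.1 - 1) w.2 ∧ w.1 ≤ K)
      = F.filter (fun w => t' ∈ dyadic (w.1 - 1) w.2 ∧ w.1 ≤ K) := by
  apply Finset.filter_congr
  intro w _
  constructor
  · rintro ⟨h1, h2⟩
    exact ⟨(mem_dyadic_congr ht ht' (by omega)).mp h1, h2⟩
  · rintro ⟨h1, h2⟩
    exact ⟨(mem_dyadic_congr ht ht' (by omega)).mpr h1, h2⟩

lemma deep_card_le {n : ℕ} {F : Finset (ℕ × ℤ)} (hF : F ⊆ Dtree 1 n) (t : ℝ) (k₀ : ℕ) :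
    (F.filter (fun w => t ∈ dyadic (w.1 - 1) w.2 ∧ k₀ < w.1)).card ≤ n - k₀ := by
  have h := Finset.card_le_card_of_injOn (f := Prod.fst)
    (s := F.filter (fun w => t ∈ dyadic (w.1 - 1) w.2 ∧ k₀ < w.1))
    (t := Finset.Icc (k₀ + 1) n) ?_ ?_
  · simpa [Nat.card_Icc] using h
  · intro w hw
    rw [Finset.mem_coe, Finset.mem_filter] at hw
    have := mem_Dtree_s16.mp (hF hw.1)
    rw [Finset.mem_coe, Finset.mem_Icc]
    omega
  · intro w hw u hu h
    simp only [Finset.coe_filter, Set.mem_setOf_eq] at hw hu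
    exact branch_eq hw.2.1 hu.2.1 h

lemma shallow_card_le {n : ℕ} {F : Finset (ℕ × ℤ)} (hF : F ⊆ Dtree 1 n) (t : ℝ) (k : ℕ) :
    (F.filter (fun w => t ∈ dyadic (w.1 - 1) w.2 ∧ w.1 ≤ k)).card ≤ k := by
  have h := Finset.card_le_card_of_injOn (f := Prod.fst)
    (s := F.filter (fun w => t ∈ dyadic (w.1 - 1) w.2 ∧ w.1 ≤ k))
    (t := Finset.Icc 1 k) ?_ ?_
  · simpa [Nat.card_Icc] using h
  · intro w hw
    rw [Finset.mem_coe, Finset.mem_filter] at hw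
    have := mem_Dtree_s16.mp (hF hw.1)
    rw [Finset.mem_coe, Finset.mem_Icc]
    omega
  · intro w hw u hu h
    simp only [Finset.coe_filter, Set.mem_setOf_eq] at hw hu
    exact branch_eq hw.2.1 hu.2.1 h

lemma exists_crossing (f : ℕ → ℕ) (n i : ℕ) (h0 : f 0 < i) (hn : i ≤ f n) :
    ∃ k, f k < i ∧ i ≤ f (k + 1) := by
  classical
  have hne : ∃ m, i ≤ f m := ⟨n, hn⟩
  set m := Nat.find hne with hm
  have hspec : i ≤ f m := Nat.find_spec hne
  have hm0 : m ≠ 0 := by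
    intro h
    rw [h] at hspec
    omega
  obtain ⟨k, hk⟩ : ∃ k, m = k + 1 := ⟨m - 1, by omega⟩
  refine ⟨k, ?_, by rw [← hk]; exact hspec⟩
  have := Nat.find_min hne (show k < m by omega)
  omega

lemma sum_pow_Icc (l : ℕ) : ∑ i ∈ Finset.Icc 1 l, 2 ^ (i - 1) = 2 ^ l - 1 := by
  induction l with
  | zero => simp
  | succ l ih =>
    rw [Finset.sum_Icc_succ_top (by omega), ih]
    have : 1 ≤ 2 ^ l := Nat.one_le_two_pow
    simp only [Nat.add_sub_cancel]
    rw [pow_succ]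
    omega

noncomputable def pick (F : Finset (ℕ × ℤ)) (t : ℝ) (i : ℕ) : ℕ × ℤ :=
  if h : ∃ v, v ∈ F ∧ t ∈ dyadic (v.1 - 1) v.2 ∧
      (F.filter fun w => t ∈ dyadic (w.1 - 1) w.2 ∧ w.1 ≤ v.1).card = i ∧ i ≤ v.1
  then h.choose else (0, 0)

lemma pick_spec {F : Finset (ℕ × ℤ)} {t : ℝ} {i : ℕ}
    (h : ∃ v, v ∈ F ∧ t ∈ dyadic (v.1 - 1) v.2 ∧
      (F.filter fun w => t ∈ dyadic (w.1 - 1) w.2 ∧ w.1 ≤ v.1).card = i ∧ i ≤ v.1) :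
    pick F t i ∈ F ∧ t ∈ dyadic ((pick F t i).1 - 1) (pick F t i).2 ∧
      (F.filter fun w => t ∈ dyadic (w.1 - 1) w.2 ∧ w.1 ≤ (pick F t i).1).card = i ∧
      i ≤ (pick F t i).1 := by
  rw [pick, dif_pos h]
  exact h.choose_spec

theorem exists_extension (n l : ℕ) (hn : 1 ≤ n) (hl : l ≤ n)
    (F : Finset (ℕ × ℤ)) (hF : F ⊆ Dtree 1 n) (hlh : lh F ≤ l)
    (hcard : F.card < 2 ^ l - 1) :
    ∃ kj ∈ Dtree 1 n, kj ∉ F ∧ lh (insert kj F) ≤ l := by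
  classical
  by_contra hcon
  push_neg at hcon
  -- Step 1 : every branch meets F at least l times
  have step1 : ∀ t ∈ Set.Ico (0:ℝ) 1, l ≤ branchCount F t := by
    intro t ht
    by_contra hlt
    push_neg at hlt
    set g : ℕ → ℤ := fun k => ⌊t * 2 ^ (k - 1)⌋ + 1 with hg
    have hmemg : ∀ k : ℕ, t ∈ dyadic (k - 1) (g k) := by
      intro k
      apply mem_dyadic_iff.mpr
      show ⌊t * 2 ^ (k - 1)⌋ = ⌊t * 2 ^ (k - 1)⌋ + 1 - 1
      ring
    have hgD : ∀ k, 1 ≤ k → k ≤ n → ((k, g k) : ℕ × ℤ) ∈ Dtree 1 n := by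
      intro k h1 h2
      rw [mem_Dtree_s16]
      have hpos : (0:ℝ) ≤ t * 2 ^ (k - 1) := mul_nonneg ht.1 (by positivity)
      have h2p : (0:ℝ) < 2 ^ (k - 1) := by positivity
      have hfl : (0:ℤ) ≤ ⌊t * 2 ^ (k - 1)⌋ := Int.floor_nonneg.mpr hpos
      have hfu : ⌊t * 2 ^ (k - 1)⌋ < (2:ℤ) ^ (k - 1) := by
        rw [Int.floor_lt]
        push_cast
        nlinarith [ht.2]
      refine ⟨h1, h2, ?_, ?_⟩
      · show 1 ≤ ⌊t * 2 ^ (k - 1)⌋ + 1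
        linarith
      · show ⌊t * 2 ^ (k - 1)⌋ + 1 ≤ 2 ^ (k - 1)
        linarith
    set K : Finset ℕ := (Finset.Icc 1 n).filter (fun k => ((k, g k) : ℕ × ℤ) ∉ F) with hK
    have hKne : K.Nonempty := by
      rw [Finset.nonempty_iff_ne_empty]
      intro hKe
      have hall : ∀ k, 1 ≤ k → k ≤ n → ((k, g k) : ℕ × ℤ) ∈ F := by
        intro k h1 h2
        by_contra hne
        have hkK : k ∈ K := Finset.mem_filter.mpr ⟨Finset.mem_Icc.mpr ⟨h1, h2⟩, hne⟩
        rw [hKe] at hkK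
        exact absurd hkK (Finset.notMem_empty k)
      have hinj : n ≤ branchCount F t := by
        have hc := Finset.card_le_card_of_injOn (f := fun k => ((k, g k) : ℕ × ℤ))
          (s := Finset.Icc 1 n) (t := F.filter (fun kj => t ∈ dyadic (kj.1 - 1) kj.2)) ?_ ?_
        · unfold branchCount
          simpa [Nat.card_Icc] using hc
        · intro k hk
          rw [Finset.mem_coe, Finset.mem_Icc] at hk
          exact Finset.mem_filter.mpr ⟨hall k hk.1 hk.2, hmemg k⟩
        · intro a _ b _ hab
          exact (Prod.ext_iff.mp hab).1
      omega
    set k₀ := K.max' hKne with hk₀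
    have hk₀K : k₀ ∈ K := K.max'_mem hKne
    rw [hK, Finset.mem_filter, Finset.mem_Icc] at hk₀K
    obtain ⟨⟨hk₀1, hk₀n⟩, hvF⟩ := hk₀K
    set v : ℕ × ℤ := (k₀, g k₀) with hv
    have hvD : v ∈ Dtree 1 n := hgD k₀ hk₀1 hk₀n
    have hsplit : ∀ s : ℝ, branchCount F s
        = (F.filter (fun w => s ∈ dyadic (w.1 - 1) w.2 ∧ w.1 ≤ k₀)).card
          + (F.filter (fun w => s ∈ dyadic (w.1 - 1) w.2 ∧ k₀ < w.1)).card := by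
      intro s
      unfold branchCount
      rw [← Finset.filter_filter, ← Finset.filter_filter,
        ← Finset.card_filter_add_card_filter_not (p := fun w : ℕ × ℤ => w.1 ≤ k₀)
          (s := F.filter (fun w => s ∈ dyadic (w.1 - 1) w.2))]
      congr 1
      exact congrArg Finset.card (Finset.filter_congr (fun w _ => by simp [not_le]))
    have hBt : n - k₀ ≤ (F.filter (fun w => t ∈ dyadic (w.1 - 1) w.2 ∧ k₀ < w.1)).card := by
      have hc := Finset.card_le_card_of_injOn (f := fun k => ((k, g k) : ℕ × ℤ))
        (s := Finset.Icc (k₀ + 1) n)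
        (t := F.filter (fun w => t ∈ dyadic (w.1 - 1) w.2 ∧ k₀ < w.1)) ?_ ?_
      · simpa [Nat.card_Icc] using hc
      · intro k hk
        rw [Finset.mem_coe, Finset.mem_Icc] at hk
        have hkF : ((k, g k) : ℕ × ℤ) ∈ F := by
          by_contra hne
          have hkK : k ∈ K := Finset.mem_filter.mpr ⟨Finset.mem_Icc.mpr ⟨by omega, hk.2⟩, hne⟩
          have := K.le_max' k hkK
          omega
        exact Finset.mem_filter.mpr ⟨hkF, hmemg k, show k₀ < k by omega⟩
      · intro a _ b _ hab
        exact (Prod.ext_iff.mp hab).1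
    have hgood : lh (insert v F) ≤ l := by
      rw [lh_le_iff]
      intro t' ht'
      by_cases hbr : t' ∈ dyadic (v.1 - 1) v.2
      · have hbr' : t' ∈ dyadic (k₀ - 1) (g k₀) := hbr
        have hA : (F.filter (fun w => t' ∈ dyadic (w.1 - 1) w.2 ∧ w.1 ≤ k₀)).card
            = (F.filter (fun w => t ∈ dyadic (w.1 - 1) w.2 ∧ w.1 ≤ k₀)).card :=
          congrArg Finset.card (prefix_filter_eq F hbr' (hmemg k₀))
        have hB : (F.filter (fun w => t' ∈ dyadic (w.1 - 1) w.2 ∧ k₀ < w.1)).card ≤ n - k₀ :=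
          deep_card_le hF t' k₀
        have h1 := hsplit t'
        have h2 := hsplit t
        have hins : branchCount (insert v F) t' ≤ branchCount F t' + 1 := by
          unfold branchCount
          rw [Finset.filter_insert]
          split_ifs with h
          all_goals first
            | exact Finset.card_insert_le _ _
            | exact Nat.le_succ _
        omega
      · have heq : branchCount (insert v F) t' = branchCount F t' := by
          unfold branchCount
          rw [Finset.filter_insert, if_neg hbr]
        rw [heq]
        exact lh_le_iff.mp hlh t' ht'
    exact absurd hgood (not_le.mpr (hcon v hvD hvF))
  -- Step 2 : injection from a set of size 2^l - 1 into F
  have hpick : ∀ p : (_ : ℕ) × ℕ,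
      p ∈ (Finset.Icc 1 l).sigma (fun i => Finset.range (2 ^ (i - 1))) →
      ∃ v, v ∈ F ∧ ((p.2 : ℝ) / 2 ^ (p.1 - 1)) ∈ dyadic (v.1 - 1) v.2 ∧
        (F.filter fun w => ((p.2 : ℝ) / 2 ^ (p.1 - 1)) ∈ dyadic (w.1 - 1) w.2 ∧ w.1 ≤ v.1).card
          = p.1 ∧ p.1 ≤ v.1 := by
    rintro ⟨i, m⟩ hp
    rw [Finset.mem_sigma, Finset.mem_Icc, Finset.mem_range] at hp
    obtain ⟨⟨hi1, hil⟩, hm⟩ := hp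
    dsimp only at hi1 hil hm ⊢
    set t : ℝ := (m : ℝ) / 2 ^ (i - 1) with htdef
    have ht : t ∈ Set.Ico (0:ℝ) 1 := by
      constructor
      · positivity
      · rw [htdef, div_lt_one (by positivity)]
        exact_mod_cast hm
    have hcnt : i ≤ branchCount F t := le_trans hil (step1 t ht)
    set f : ℕ → ℕ := fun k => (F.filter (fun w => t ∈ dyadic (w.1 - 1) w.2 ∧ w.1 ≤ k)).card
      with hfdef
    have hf0 : f 0 < i := by
      have hz : f 0 = 0 := by
        rw [hfdef]
        apply Finset.card_eq_zero.mpr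
        rw [Finset.filter_eq_empty_iff]
        intro w hw
        have := mem_Dtree_s16.mp (hF hw)
        rintro ⟨-, h⟩
        omega
      omega
    have hfn : i ≤ f n := by
      have hbn : branchCount F t = f n := by
        unfold branchCount
        rw [hfdef]
        congr 1
        apply Finset.filter_congr
        intro w hw
        have := mem_Dtree_s16.mp (hF hw)
        constructor
        · intro h
          exact ⟨h, by omega⟩
        · rintro ⟨h, -⟩
          exact h
      omega
    obtain ⟨k, hk1, hk2⟩ := exists_crossing f n i hf0 hfn
    have hex : ∃ w, w ∈ F ∧ (t ∈ dyadic (w.1 - 1) w.2) ∧ w.1 = k + 1 := by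
      by_contra hno
      push_neg at hno
      have hsub : F.filter (fun w => t ∈ dyadic (w.1 - 1) w.2 ∧ w.1 ≤ k + 1)
          ⊆ F.filter (fun w => t ∈ dyadic (w.1 - 1) w.2 ∧ w.1 ≤ k) := by
        intro u hu
        rw [Finset.mem_filter] at hu ⊢
        refine ⟨hu.1, hu.2.1, ?_⟩
        have := hno u hu.1 hu.2.1
        omega
      have hcc := Finset.card_le_card hsub
      have hfk1 : f (k + 1) ≤ f k := hcc
      omega
    obtain ⟨w, hwF, hwbr, hwk⟩ := hex
    refine ⟨w, hwF, hwbr, ?_, ?_⟩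
    · have hstep : f (k + 1) ≤ f k + 1 := by
        have hsub : F.filter (fun u => t ∈ dyadic (u.1 - 1) u.2 ∧ u.1 ≤ k + 1)
            ⊆ insert w (F.filter (fun u => t ∈ dyadic (u.1 - 1) u.2 ∧ u.1 ≤ k)) := by
          intro u hu
          rw [Finset.mem_filter] at hu
          rw [Finset.mem_insert]
          by_cases huk : u.1 ≤ k
          · exact Or.inr (Finset.mem_filter.mpr ⟨hu.1, hu.2.1, huk⟩)
          · exact Or.inl (branch_eq hu.2.1 hwbr (by omega))
        calc f (k + 1) ≤ (insert w (F.filter (fun u => t ∈ dyadic (u.1 - 1) u.2 ∧ u.1 ≤ k))).card :=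
              Finset.card_le_card hsub
          _ ≤ f k + 1 := Finset.card_insert_le _ _
      have hfi : f (k + 1) = i := by omega
      show (F.filter fun u => t ∈ dyadic (u.1 - 1) u.2 ∧ u.1 ≤ w.1).card = i
      rw [hwk]
      exact hfi
    · have hsh : f (k + 1) ≤ k + 1 := shallow_card_le hF t (k + 1)
      omega
  have hinj := Finset.card_le_card_of_injOn
    (f := fun p : (_ : ℕ) × ℕ => pick F ((p.2 : ℝ) / 2 ^ (p.1 - 1)) p.1)
    (s := (Finset.Icc 1 l).sigma (fun i => Finset.range (2 ^ (i - 1)))) (t := F) ?_ ?_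
  · rw [Finset.card_sigma] at hinj
    simp only [Finset.card_range] at hinj
    rw [sum_pow_Icc] at hinj
    omega
  · intro p hp
    exact (pick_spec (hpick p hp)).1
  · rintro ⟨i, m⟩ hp ⟨i', m'⟩ hq hpq
    simp only [Finset.coe_sigma, Set.mem_setOf_eq] at hp hq
    have hp' : (⟨i, m⟩ : (_ : ℕ) × ℕ) ∈ (Finset.Icc 1 l).sigma (fun i => Finset.range (2 ^ (i - 1))) := by
      exact_mod_cast hp
    have hq' : (⟨i', m'⟩ : (_ : ℕ) × ℕ) ∈ (Finset.Icc 1 l).sigma (fun i => Finset.range (2 ^ (i - 1))) := by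
      exact_mod_cast hq
    obtain ⟨hvF, hvbr, hvcard, hvi⟩ := pick_spec (hpick _ hp')
    obtain ⟨huF, hubr, hucard, hui⟩ := pick_spec (hpick _ hq')
    simp only at hpq hvF hvbr hvcard hvi huF hubr hucard hui
    rw [← hpq] at hubr hucard hui
    set v := pick F ((m : ℝ) / 2 ^ (i - 1)) i with hvdef
    have hii : i = i' := by
      rw [← hvcard, ← hucard, prefix_filter_eq F hvbr hubr]
    subst hii
    have hfl : ⌊((m : ℝ) / 2 ^ (i - 1)) * 2 ^ (v.1 - 1)⌋
        = ⌊((m' : ℝ) / 2 ^ (i - 1)) * 2 ^ (v.1 - 1)⌋ := by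
      rw [mem_dyadic_iff] at hvbr hubr
      rw [hvbr, hubr]
    have hmm : ⌊((m : ℝ) / 2 ^ (i - 1)) * 2 ^ (i - 1)⌋
        = ⌊((m' : ℝ) / 2 ^ (i - 1)) * 2 ^ (i - 1)⌋ :=
      floor_nest (by omega) hfl
    have hc1 : ((m : ℝ) / 2 ^ (i - 1)) * 2 ^ (i - 1) = (m : ℝ) := by
      field_simp
    have hc2 : ((m' : ℝ) / 2 ^ (i - 1)) * 2 ^ (i - 1) = (m' : ℝ) := by
      field_simp
    rw [hc1, hc2, Int.floor_natCast, Int.floor_natCast] at hmm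
    have : m = m' := by exact_mod_cast hmm
    subst this
    rfl
end
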